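/- arXiv:1211.3929 — 6 statements merged into one kernel-verified Lean document; each statement's English description precedes it below -/
import Mathlib

section
/- For every n ≥ 2, the n×n tridiagonal real symmetric matrix with diagonal entries (-2, -1, -1, ..., -1, -2), all super- and sub-diagonal entries equal to 1, and zeros elsewhere, has smallest eigenvalue exactly -3. -/
open Finset Matrix

private def Bmat (n : ℕ) : Matrix (Fin n) (Fin n) ℝ := Matrix.of fun i j =>
  if i = j then (if (i : ℕ) = 0 ∨ (i : ℕ) = n - 1 then -2 else -1)
  else if (i : ℕ) + 1 = (j : ℕ) ∨ (j : ℕ) + 1 = (i : ℕ) then 1 else 0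

private lemma Bmat_row (n : ℕ) (x : Fin n → ℝ) (i : Fin n) :
    (Bmat n).mulVec x i =
      (if h : (i:ℕ)+1 < n then x ⟨(i:ℕ)+1, h⟩ else 0)
      + (if (i:ℕ) = 0 ∨ (i:ℕ) = n-1 then (-2:ℝ) else -1) * x i
      + (if h : 0 < (i:ℕ) then x ⟨(i:ℕ)-1, by omega⟩ else 0) := by
  have key : ∀ j : Fin n, Bmat n i j * x j =
      (if i = j then (if (i:ℕ) = 0 ∨ (i:ℕ) = n-1 then (-2:ℝ) else -1) * x j else 0)
      + (if (i:ℕ)+1 = (j:ℕ) then x j else 0)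
      + (if (j:ℕ)+1 = (i:ℕ) then x j else 0) := by
    intro j
    simp only [Bmat, Matrix.of_apply, Fin.ext_iff]
    split_ifs <;> first | ring1 | (exfalso; omega)
  have h1 : (∑ j : Fin n, if i = j then (if (i:ℕ) = 0 ∨ (i:ℕ) = n-1 then (-2:ℝ) else -1) * x j else 0)
      = (if (i:ℕ) = 0 ∨ (i:ℕ) = n-1 then (-2:ℝ) else -1) * x i := by
    rw [Finset.sum_ite_eq (univ : Finset (Fin n)) i
      (fun j => (if (i:ℕ) = 0 ∨ (i:ℕ) = n-1 then (-2:ℝ) else -1) * x j), if_pos (mem_univ i)]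
  have h2 : (∑ j : Fin n, if (i:ℕ)+1 = (j:ℕ) then x j else 0)
      = (if h : (i:ℕ)+1 < n then x ⟨(i:ℕ)+1, h⟩ else 0) := by
    by_cases h : (i:ℕ)+1 < n
    · rw [dif_pos h]
      have e : ∀ j : Fin n, (if (i:ℕ)+1 = (j:ℕ) then x j else 0)
          = (if (⟨(i:ℕ)+1, h⟩ : Fin n) = j then x j else 0) := by
        intro j; congr 1; simp [Fin.ext_iff]
      rw [Finset.sum_congr rfl (fun j _ => e j),
        Finset.sum_ite_eq (univ : Finset (Fin n)) _ x, if_pos (mem_univ _)]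
    · rw [dif_neg h]
      apply Finset.sum_eq_zero
      intro j _
      rw [if_neg]
      have := j.isLt; omega
  have h3 : (∑ j : Fin n, if (j:ℕ)+1 = (i:ℕ) then x j else 0)
      = (if h : 0 < (i:ℕ) then x ⟨(i:ℕ)-1, by omega⟩ else 0) := by
    by_cases h : 0 < (i:ℕ)
    · rw [dif_pos h]
      have e : ∀ j : Fin n, (if (j:ℕ)+1 = (i:ℕ) then x j else 0)
          = (if (⟨(i:ℕ)-1, by omega⟩ : Fin n) = j then x j else 0) := by
        intro j; congr 1; simp only [Fin.ext_iff, eq_iff_iff]; omega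
      rw [Finset.sum_congr rfl (fun j _ => e j),
        Finset.sum_ite_eq (univ : Finset (Fin n)) _ x, if_pos (mem_univ _)]
    · rw [dif_neg h]
      apply Finset.sum_eq_zero
      intro j _
      rw [if_neg]
      omega
  simp only [Matrix.mulVec, dotProduct]
  rw [Finset.sum_congr rfl (fun j _ => key j), Finset.sum_add_distrib,
    Finset.sum_add_distrib, h1, h2, h3]
  ring

private lemma sum_two_ind (m : ℕ) (hm : 1 ≤ m) (t : ℕ → ℝ) :
    ∑ k ∈ range (m+1), (if k = 0 ∨ k = m then t k else 0) = t 0 + t m := by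
  have h : ∀ k ∈ range (m+1), (if k = 0 ∨ k = m then t k else 0)
      = (if k = 0 then t k else 0) + (if k = m then t k else 0) := by
    intro k _
    split_ifs <;> first | ring1 | (exfalso; omega)
  rw [Finset.sum_congr rfl h, Finset.sum_add_distrib,
    Finset.sum_ite_eq' (range (m+1)) 0 t, Finset.sum_ite_eq' (range (m+1)) m t,
    if_pos (by simp : 0 ∈ range (m+1)), if_pos (by simp : m ∈ range (m+1))]

private lemma quad_identity (m : ℕ) (hm : 1 ≤ m) (y : ℕ → ℝ) (hy : y (m+1) = 0) :
    (∑ k ∈ range (m+1), y k * (y (k+1)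
        + (if k = 0 ∨ k = m then (-2:ℝ) else -1) * y k
        + (if k = 0 then 0 else y (k-1))))
      + 3 * ∑ k ∈ range (m+1), y k * y k
    = ∑ k ∈ range m, (y k + y (k+1))^2 := by
  have split : ∀ k ∈ range (m+1), y k * (y (k+1)
        + (if k = 0 ∨ k = m then (-2:ℝ) else -1) * y k
        + (if k = 0 then 0 else y (k-1)))
      = y k * y (k+1)
        + (-(y k * y k) + (if k = 0 ∨ k = m then -(y k * y k) else 0))
        + (if k = 0 then 0 else y k * y (k-1)) := by
    intro k _
    split_ifs <;> ring
  rw [Finset.sum_congr rfl split, Finset.sum_add_distrib, Finset.sum_add_distrib,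
    Finset.sum_add_distrib]
  have e1 : ∑ k ∈ range (m+1), y k * y (k+1)
      = ∑ k ∈ range m, y k * y (k+1) := by
    rw [Finset.sum_range_succ, hy, mul_zero, add_zero]
  have e2 : ∑ k ∈ range (m+1), (if k = 0 ∨ k = m then -(y k * y k) else 0)
      = -(y 0 * y 0) + -(y m * y m) := sum_two_ind m hm (fun k => -(y k * y k))
  have e3 : ∑ k ∈ range (m+1), (if k = 0 then (0:ℝ) else y k * y (k-1))
      = ∑ k ∈ range m, y (k+1) * y k := by
    rw [Finset.sum_range_succ' (fun k => if k = 0 then (0:ℝ) else y k * y (k-1)) m]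
    simp
  have e4 : ∀ k ∈ range m, (y k + y (k+1))^2
      = y k * y k + 2 * (y k * y (k+1)) + y (k+1) * y (k+1) := by
    intro k _; ring
  rw [e1, e2, e3, Finset.sum_congr rfl e4, Finset.sum_add_distrib, Finset.sum_add_distrib]
  have e5 : ∑ k ∈ range m, y k * y k = (∑ k ∈ range (m+1), y k * y k) - y m * y m := by
    rw [Finset.sum_range_succ]; ring
  have e6 : ∑ k ∈ range m, y (k+1) * y (k+1)
      = (∑ k ∈ range (m+1), y k * y k) - y 0 * y 0 := by
    rw [Finset.sum_range_succ' (fun k => y k * y k) m]; ring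
  have e7 : ∑ k ∈ range m, 2 * (y k * y (k+1)) = 2 * ∑ k ∈ range m, y k * y (k+1) := by
    rw [Finset.mul_sum]
  have e8 : ∑ k ∈ range m, y (k+1) * y k = ∑ k ∈ range m, y k * y (k+1) := by
    apply Finset.sum_congr rfl; intro k _; ring
  rw [e5, e6, e7, e8, Finset.sum_neg_distrib]
  ring

private lemma dot_quad (n : ℕ) (hn : 2 ≤ n) (x : Fin n → ℝ) :
    ∃ Q : ℝ, 0 ≤ Q ∧
      x ⬝ᵥ (Bmat n).mulVec x + 3 * (x ⬝ᵥ x) = Q := by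
  set y : ℕ → ℝ := fun k => if h : k < n then x ⟨k, h⟩ else 0 with hy
  obtain ⟨m, rfl⟩ : ∃ m, n = m + 1 := ⟨n - 1, by omega⟩
  have hm : 1 ≤ m := by omega
  have hyx : ∀ i : Fin (m+1), y (i:ℕ) = x i := by
    intro i; simp [hy, i.isLt]; intro h; exact absurd i.isLt (by omega)
  have hrow : ∀ i : Fin (m+1), x i * (Bmat (m+1)).mulVec x i
      = y (i:ℕ) * (y ((i:ℕ)+1)
        + (if (i:ℕ) = 0 ∨ (i:ℕ) = m then (-2:ℝ) else -1) * y (i:ℕ)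
        + (if (i:ℕ) = 0 then 0 else y ((i:ℕ)-1))) := by
    intro i
    rw [Bmat_row, hyx]
    have c1 : (if h : (i:ℕ)+1 < m+1 then x ⟨(i:ℕ)+1, h⟩ else 0) = y ((i:ℕ)+1) := by
      simp [hy]
    have c2 : (if h : 0 < (i:ℕ) then x ⟨(i:ℕ)-1, by omega⟩ else 0)
        = (if (i:ℕ) = 0 then 0 else y ((i:ℕ)-1)) := by
      by_cases h : (i:ℕ) = 0
      · simp [h]
      · simp only [hy, if_neg h]
        rw [dif_pos (by omega : 0 < (i:ℕ)), dif_pos (by omega : (i:ℕ)-1 < m+1)]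
    have c3 : (if (i:ℕ) = 0 ∨ (i:ℕ) = m+1-1 then (-2:ℝ) else -1)
        = (if (i:ℕ) = 0 ∨ (i:ℕ) = m then (-2:ℝ) else -1) := by norm_num
    rw [c1, c2, c3]
  have hdot : x ⬝ᵥ (Bmat (m+1)).mulVec x
      = ∑ k ∈ range (m+1), y k * (y (k+1)
        + (if k = 0 ∨ k = m then (-2:ℝ) else -1) * y k
        + (if k = 0 then 0 else y (k-1))) := by
    rw [dotProduct]
    rw [Finset.sum_congr rfl (fun i _ => hrow i)]
    exact Fin.sum_univ_eq_sum_range (fun k => y k * (y (k+1)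
      + (if k = 0 ∨ k = m then (-2:ℝ) else -1) * y k
      + (if k = 0 then 0 else y (k-1)))) (m+1)
  have hdot2 : x ⬝ᵥ x = ∑ k ∈ range (m+1), y k * y k := by
    rw [dotProduct, Finset.sum_congr rfl (fun i (_ : i ∈ univ) => by rw [← hyx i])]
    exact Fin.sum_univ_eq_sum_range (fun k => y k * y k) (m+1)
  refine ⟨∑ k ∈ range m, (y k + y (k+1))^2, Finset.sum_nonneg (fun k _ => sq_nonneg _), ?_⟩
  rw [hdot, hdot2]
  exact quad_identity m hm y (by simp [hy])

theorem stmt_5 (n : ℕ) (hn : 2 ≤ n) :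
    let B : Matrix (Fin n) (Fin n) ℝ := Matrix.of fun i j =>
      if i = j then (if (i : ℕ) = 0 ∨ (i : ℕ) = n - 1 then -2 else -1)
      else if (i : ℕ) + 1 = (j : ℕ) ∨ (j : ℕ) + 1 = (i : ℕ) then 1 else 0
    (∃ x : Fin n → ℝ, x ≠ 0 ∧ B.mulVec x = (-3 : ℝ) • x) ∧
    ∀ (μ : ℝ) (x : Fin n → ℝ), x ≠ 0 → B.mulVec x = μ • x → (-3 : ℝ) ≤ μ := by
  intro B
  have hB : B = Bmat n := rfl
  constructor
  · refine ⟨fun i : Fin n => (-1:ℝ)^(i:ℕ), ?_, ?_⟩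
    · intro h
      have := congrFun h ⟨0, by omega⟩
      simp at this
    · funext i
      rw [hB, Bmat_row]
      have hi := i.isLt
      simp only [Pi.smul_apply, smul_eq_mul]
      by_cases h0 : (i:ℕ) = 0
      · rw [dif_pos (by omega : (i:ℕ)+1 < n), dif_neg (by omega), if_pos (Or.inl h0)]
        simp [h0]
        norm_num
      · by_cases h1 : (i:ℕ) = n-1
        · rw [dif_neg (by omega : ¬ ((i:ℕ)+1 < n)), dif_pos (by omega : 0 < (i:ℕ)),
            if_pos (Or.inr h1)]
          obtain ⟨k, hk⟩ : ∃ k, (i:ℕ) = k + 1 := ⟨(i:ℕ)-1, by omega⟩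
          simp only [hk, Nat.add_sub_cancel]
          rw [pow_succ]
          ring
        · rw [dif_pos (by omega : (i:ℕ)+1 < n), dif_pos (by omega : 0 < (i:ℕ)),
            if_neg (by omega : ¬ ((i:ℕ) = 0 ∨ (i:ℕ) = n-1))]
          obtain ⟨k, hk⟩ : ∃ k, (i:ℕ) = k + 1 := ⟨(i:ℕ)-1, by omega⟩
          simp only [hk, Nat.add_sub_cancel]
          rw [pow_succ, pow_succ]
          ring
  · intro μ x hx heig
    obtain ⟨Q, hQ0, hQ⟩ := dot_quad n hn x
    have hdot : x ⬝ᵥ (Bmat n).mulVec x = μ * (x ⬝ᵥ x) := by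
      rw [← hB, heig]
      simp [dotProduct_smul, smul_eq_mul]
    have hxx : 0 < x ⬝ᵥ x := by
      obtain ⟨i, hi⟩ := Function.ne_iff.mp hx
      simp only [Pi.zero_apply] at hi
      rw [dotProduct]
      exact Finset.sum_pos' (fun j _ => mul_self_nonneg (x j))
        ⟨i, mem_univ i, mul_self_pos.mpr hi⟩
    rw [hdot] at hQ
    nlinarith
end

section
/- Let n ≥ 2 and let B be the n×n tridiagonal real symmetric matrix with diagonal entries δ₁ = -2, δₙ = -2, and δᵢ ≤ -1 for 1 < i < n, and with entries εᵢ ∈ {±1} in positions (i, i+1) and (i+1, i). Then the smallest eigenvalue of B is at most -3. -/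
open Matrix in
lemma aux_shift {n : ℕ} {A : Matrix (Fin n) (Fin n) ℝ} (hA : A.IsHermitian) (c : ℝ)
    (h : ∀ i, c ≤ hA.eigenvalues i) : (A - c • 1).PosSemidef := by
  have hkey : A - c • (1 : Matrix (Fin n) (Fin n) ℝ) =
      (hA.eigenvectorUnitary : Matrix (Fin n) (Fin n) ℝ) *
        Matrix.diagonal (fun i => hA.eigenvalues i - c) *
        star (hA.eigenvectorUnitary : Matrix (Fin n) (Fin n) ℝ) := by
    have hsp := hA.spectral_theorem
    rw [Unitary.conjStarAlgAut_apply] at hsp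
    have hU : (hA.eigenvectorUnitary : Matrix (Fin n) (Fin n) ℝ) *
        star (hA.eigenvectorUnitary : Matrix (Fin n) (Fin n) ℝ) = 1 :=
      Unitary.coe_mul_star_self _
    have hdiag : Matrix.diagonal (fun i => hA.eigenvalues i - c) =
        Matrix.diagonal (RCLike.ofReal ∘ hA.eigenvalues) - c • (1 : Matrix (Fin n) (Fin n) ℝ) := by
      rw [Matrix.smul_one_eq_diagonal, ← Matrix.diagonal_sub]
      congr 1
    rw [hdiag, Matrix.mul_sub, Matrix.sub_mul, Matrix.mul_smul, Matrix.mul_one, Matrix.smul_mul,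
      hU, ← hsp]
  rw [hkey]
  exact (Matrix.posSemidef_diagonal_iff.mpr (fun i => by simpa using h i)).mul_mul_conjTranspose_same _

noncomputable def auxSign (ε : ℕ → ℝ) : ℕ → ℝ
  | 0 => 1
  | (k + 1) => -ε k * auxSign ε k

open scoped Matrix

theorem stmt_6 (n : ℕ) (hn : 2 ≤ n) (δ ε : ℕ → ℝ)
    (hδ0 : δ 0 = -2) (hδlast : δ (n - 1) = -2)
    (hδ : ∀ i : ℕ, 0 < i → i < n - 1 → δ i ≤ -1)
    (hε : ∀ i : ℕ, i < n - 1 → ε i = 1 ∨ ε i = -1) :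
    let B : Matrix (Fin n) (Fin n) ℝ := Matrix.of fun i j =>
      if i = j then δ (i : ℕ)
      else if (i : ℕ) + 1 = (j : ℕ) then ε (i : ℕ)
      else if (j : ℕ) + 1 = (i : ℕ) then ε (j : ℕ)
      else 0
    ∃ (μ : ℝ) (x : Fin n → ℝ), x ≠ 0 ∧ B.mulVec x = μ • x ∧ μ ≤ -3 := by
  intro B
  classical
  -- B is symmetric
  have hB : B.IsHermitian := by
    ext i j
    simp only [B, Matrix.conjTranspose_apply, Matrix.of_apply, star_trivial]
    by_cases hij : i = j
    · subst hij; simp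
    · have hij' : j ≠ i := fun h => hij h.symm
      simp only [hij, hij', if_false]
      split_ifs with h1 h2 h2 <;> first | rfl | omega
  -- min eigenvalue
  obtain ⟨i₀, -, hmin⟩ := Finset.exists_min_image Finset.univ hB.eigenvalues
    ⟨⟨0, by omega⟩, Finset.mem_univ _⟩
  set μ := hB.eigenvalues i₀ with hμ
  refine ⟨μ, hB.eigenvectorBasis i₀, ?_, hB.mulVec_eigenvectorBasis i₀, ?_⟩
  · intro h
    have hne := hB.eigenvectorBasis.toBasis.ne_zero i₀
    rw [OrthonormalBasis.coe_toBasis] at hne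
    exact hne (by ext k; exact congrFun h k)
  -- now show μ ≤ -3
  have hPSD : (B - μ • 1).PosSemidef := aux_shift hB μ (fun i => hmin i (Finset.mem_univ i))
  -- test vector
  obtain ⟨s, hs0, hsucc⟩ : ∃ s : ℕ → ℝ, s 0 = 1 ∧ ∀ k, s (k + 1) = -ε k * s k :=
    ⟨auxSign ε, rfl, fun k => rfl⟩
  have hsq : ∀ k, k < n → s k * s k = 1 := by
    intro k
    induction k with
    | zero => intro _; rw [hs0]; norm_num
    | succ k ih =>
      intro hk
      have hk' : k < n - 1 := by omega
      rcases hε k hk' with h | h <;>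
        · rw [hsucc, h]
          have := ih (by omega)
          nlinarith
  have hpair : ∀ k, k < n - 1 → s k * (ε k * s (k + 1)) = -1 := by
    intro k hk
    have h1 := hsq k (by omega)
    rcases hε k hk with h | h <;> · rw [hsucc, h]; nlinarith
  obtain ⟨x, hxd⟩ : ∃ x : Fin n → ℝ, ∀ i : Fin n, x i = s (i : ℕ) :=
    ⟨fun i => s (i : ℕ), fun _ => rfl⟩
  -- entrywise formula helper
  set g : ℕ → ℕ → ℝ := fun i j =>
    (if i = j then δ i else if i + 1 = j then ε i else if j + 1 = i then ε j else 0) * s j with hg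
  have hBv : ∀ i : Fin n, (B.mulVec x) i = ∑ j ∈ Finset.range n, g (i : ℕ) j := by
    intro i
    have h1 : (B.mulVec x) i = ∑ j : Fin n, B i j * x j := rfl
    rw [h1, ← Fin.sum_univ_eq_sum_range (g (i : ℕ)) n]
    refine Finset.sum_congr rfl fun j _ => ?_
    rw [hxd j]
    simp only [B, g, Matrix.of_apply, Fin.ext_iff]
  -- each diagonal-quadratic term is ≤ -3
  have key : ∀ i : Fin n, x i * (B.mulVec x) i ≤ -3 := by
    intro i
    rw [hBv i]
    by_cases h0 : (i : ℕ) = 0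
    · -- first row
      have hsub : ({0, 1} : Finset ℕ) ⊆ Finset.range n := by
        intro j hj; simp only [Finset.mem_insert, Finset.mem_singleton] at hj
        rcases hj with rfl | rfl <;> simp [Finset.mem_range] <;> omega
      have hz : ∀ j ∈ Finset.range n, j ∉ ({0, 1} : Finset ℕ) → g 0 j = 0 := by
        intro j hjr hj
        have hjn := Finset.mem_range.mp hjr
        simp only [Finset.mem_insert, Finset.mem_singleton, not_or] at hj
        simp only [g]
        split_ifs with h1 h2 h3 <;> first | (exfalso; omega) | (exact h3.elim) | ring
      rw [h0, ← Finset.sum_subset hsub hz, Finset.sum_pair (by norm_num : (0:ℕ) ≠ 1)]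
      have hg0 : g 0 0 = δ 0 * s 0 := by simp [g]
      have hg1 : g 0 1 = ε 0 * s 1 := by norm_num [g]
      have hp := hpair 0 (by omega)
      have hq := hsq 0 (by omega)
      have hxi : x i = s 0 := by rw [hxd, h0]
      rw [hg0, hg1, hxi]
      have e : s 0 * (δ 0 * s 0 + ε 0 * s 1) = δ 0 * (s 0 * s 0) + s 0 * (ε 0 * s 1) := by ring
      rw [e, hp, hq, hδ0]; norm_num
    · by_cases hl : (i : ℕ) = n - 1
      · -- last row
        have hsub : ({n - 2, n - 1} : Finset ℕ) ⊆ Finset.range n := by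
          intro j hj; simp only [Finset.mem_insert, Finset.mem_singleton] at hj
          rcases hj with rfl | rfl <;> simp [Finset.mem_range] <;> omega
        have hz : ∀ j ∈ Finset.range n, j ∉ ({n - 2, n - 1} : Finset ℕ) → g (n - 1) j = 0 := by
          intro j hjr hj
          have hjn := Finset.mem_range.mp hjr
          simp only [Finset.mem_insert, Finset.mem_singleton, not_or] at hj
          simp only [g]
          split_ifs with h1 h2 h3 <;> first | (exfalso; omega) | (exact h3.elim) | ring
        rw [hl, ← Finset.sum_subset hsub hz, Finset.sum_pair (by omega : n - 2 ≠ n - 1)]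
        have hg1 : g (n - 1) (n - 2) = ε (n - 2) * s (n - 2) := by
          simp only [g]; split_ifs with h1 h2 h3 <;> first | omega | rfl
        have hg2 : g (n - 1) (n - 1) = δ (n - 1) * s (n - 1) := by simp [g]
        have hn2 : n - 2 + 1 = n - 1 := by omega
        have hp := hpair (n - 2) (by omega)
        rw [hn2] at hp
        have hq := hsq (n - 1) (by omega)
        have hxi : x i = s (n - 1) := by rw [hxd, hl]
        rw [hg1, hg2, hxi]
        have e : s (n - 1) * (ε (n - 2) * s (n - 2) + δ (n - 1) * s (n - 1)) =
            s (n - 2) * (ε (n - 2) * s (n - 1)) + δ (n - 1) * (s (n - 1) * s (n - 1)) := by ring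
        rw [e, hp, hq, hδlast]; norm_num
      · -- middle rows
        obtain ⟨m, hm⟩ : ∃ m, (i : ℕ) = m + 1 := ⟨(i : ℕ) - 1, by omega⟩
        have hmlt : m + 1 < n - 1 := by
          have := i.isLt; omega
        have hsub : ({m, m + 1, m + 2} : Finset ℕ) ⊆ Finset.range n := by
          intro j hj
          simp only [Finset.mem_insert, Finset.mem_singleton] at hj
          rcases hj with rfl | rfl | rfl <;> simp [Finset.mem_range] <;> omega
        have hz : ∀ j ∈ Finset.range n, j ∉ ({m, m + 1, m + 2} : Finset ℕ) →
            g (m + 1) j = 0 := by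
          intro j hjr hj
          have hjn := Finset.mem_range.mp hjr
          simp only [Finset.mem_insert, Finset.mem_singleton, not_or] at hj
          simp only [g]
          split_ifs with h1 h2 h3 <;> first | (exfalso; omega) | (exact h3.elim) | ring
        rw [hm, ← Finset.sum_subset hsub hz]
        rw [show ({m, m + 1, m + 2} : Finset ℕ) = insert m ({m + 1, m + 2} : Finset ℕ) from rfl]
        rw [Finset.sum_insert (by simp only [Finset.mem_insert, Finset.mem_singleton]; omega),
          Finset.sum_pair (by omega : m + 1 ≠ m + 2)]
        have hg1 : g (m + 1) m = ε m * s m := by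
          simp only [g]; split_ifs with h1 h2 h3 <;> first | omega | rfl
        have hg2 : g (m + 1) (m + 1) = δ (m + 1) * s (m + 1) := by simp [g]
        have hg3 : g (m + 1) (m + 2) = ε (m + 1) * s (m + 2) := by
          simp only [g]; split_ifs with h1 h2 <;> first | omega | rfl
        have hp1 := hpair m (by omega)
        have hp2 := hpair (m + 1) (by omega)
        have hq := hsq (m + 1) (by omega)
        have hδm := hδ (m + 1) (by omega) (by omega)
        have hxi : x i = s (m + 1) := by rw [hxd, hm]
        rw [hg1, hg2, hg3, hxi]
        have e : s (m + 1) * (ε m * s m + (δ (m + 1) * s (m + 1) + ε (m + 1) * s (m + 2))) =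
            s m * (ε m * s (m + 1)) + δ (m + 1) * (s (m + 1) * s (m + 1)) +
              s (m + 1) * (ε (m + 1) * s (m + 2)) := by ring
        rw [e, hp1, hp2, hq]; linarith
  -- norm of x
  have hxx : x ⬝ᵥ x = (n : ℝ) := by
    have : ∀ i : Fin n, x i * x i = 1 := fun i => by rw [hxd]; exact hsq (i : ℕ) i.isLt
    simp only [dotProduct]
    rw [Finset.sum_congr rfl fun i _ => this i]
    simp
  -- quadratic form bound
  have hQ : x ⬝ᵥ B.mulVec x ≤ -3 * (n : ℝ) := by
    have h1 : x ⬝ᵥ B.mulVec x = ∑ i : Fin n, x i * (B.mulVec x) i := rfl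
    rw [h1]
    calc ∑ i : Fin n, x i * (B.mulVec x) i ≤ ∑ _i : Fin n, (-3 : ℝ) :=
          Finset.sum_le_sum fun i _ => key i
      _ = -3 * (n : ℝ) := by simp [mul_comm]
  -- conclude
  have h0 := hPSD.dotProduct_mulVec_nonneg x
  have hstar : star x = x := by ext k; simp
  rw [hstar, Matrix.sub_mulVec, dotProduct_sub, Matrix.smul_mulVec,
    Matrix.one_mulVec, dotProduct_smul, hxx] at h0
  rw [smul_eq_mul] at h0
  have hnpos : (0 : ℝ) < (n : ℝ) := by
    have : 0 < n := by omega
    exact_mod_cast this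
  exact (mul_le_mul_iff_of_pos_right hnpos).mp (by linarith)
end

section
/- Let n ≥ 4 and let B be the n×n real symmetric matrix defined as follows: B(1,1) = -2, B(i,i) = -1 for 2 ≤ i ≤ n, B(i,i+1) = B(i+1,i) = εᵢ ∈ {±1} for 1 ≤ i ≤ n-2, B(n-2, n) = B(n, n-2) = ε_{n-1} ∈ {±1}, and all other entries are 0. Then -3 is an eigenvalue of B; in particular the smallest eigenvalue of B is at most -3. -/
noncomputable def gmat (n : ℕ) (ε : ℕ → ℝ) (a b : ℕ) : ℝ :=
  if a = b then (if a = 0 then -2 else -1)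
  else if b = a + 1 ∧ b ≤ n - 2 then ε a
  else if a = b + 1 ∧ a ≤ n - 2 then ε b
  else if (a = n - 3 ∧ b = n - 1) ∨ (b = n - 3 ∧ a = n - 1) then ε (n - 2)
  else 0

noncomputable def yvec (n : ℕ) (ε : ℕ → ℝ) (m : ℕ) : ℝ :=
  if m = n - 2 then -ε (n - 3)
  else if m = n - 1 then -ε (n - 2)
  else 2 * ∏ k ∈ Finset.Ico m (n - 3), (-ε k)

lemma yvec_mid (n : ℕ) (hn : 4 ≤ n) (ε : ℕ → ℝ) (m : ℕ) (hm : m ≤ n - 3) :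
    yvec n ε m = 2 * ∏ k ∈ Finset.Ico m (n - 3), (-ε k) := by
  unfold yvec
  rw [if_neg (by omega), if_neg (by omega)]

lemma yvec_top (n : ℕ) (hn : 4 ≤ n) (ε : ℕ → ℝ) : yvec n ε (n - 3) = 2 := by
  rw [yvec_mid n hn ε _ le_rfl, Finset.Ico_self, Finset.prod_empty, mul_one]

lemma yvec_step (n : ℕ) (hn : 4 ≤ n) (ε : ℕ → ℝ) (m : ℕ) (hm : m < n - 3) :
    yvec n ε m = -ε m * yvec n ε (m + 1) := by
  rw [yvec_mid n hn ε m (by omega), yvec_mid n hn ε (m + 1) (by omega),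
    Finset.prod_eq_prod_Ico_succ_bot hm]
  ring

lemma yvec_pen (n : ℕ) (ε : ℕ → ℝ) : yvec n ε (n - 2) = -ε (n - 3) := by
  unfold yvec; rw [if_pos rfl]

lemma yvec_last (n : ℕ) (hn : 4 ≤ n) (ε : ℕ → ℝ) : yvec n ε (n - 1) = -ε (n - 2) := by
  unfold yvec; rw [if_neg (by omega), if_pos rfl]

lemma sum_two (n j1 j2 : ℕ) (f : ℕ → ℝ) (h1 : j1 < n) (h2 : j2 < n) (h12 : j1 ≠ j2)
    (hz : ∀ b, b < n → b ≠ j1 → b ≠ j2 → f b = 0) :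
    ∑ b ∈ Finset.range n, f b = f j1 + f j2 := by
  have key : ∑ b ∈ ({j1, j2} : Finset ℕ), f b = ∑ b ∈ Finset.range n, f b := by
    apply Finset.sum_subset
    · intro b hb
      simp only [Finset.mem_insert, Finset.mem_singleton] at hb
      simp only [Finset.mem_range]; omega
    · intro b hb hnb
      simp only [Finset.mem_insert, Finset.mem_singleton, not_or] at hnb
      exact hz b (Finset.mem_range.mp hb) hnb.1 hnb.2
  rw [← key, Finset.sum_insert (by simp [h12]), Finset.sum_singleton]

lemma sum_three (n j1 j2 j3 : ℕ) (f : ℕ → ℝ) (h1 : j1 < n) (h2 : j2 < n) (h3 : j3 < n)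
    (h12 : j1 ≠ j2) (h13 : j1 ≠ j3) (h23 : j2 ≠ j3)
    (hz : ∀ b, b < n → b ≠ j1 → b ≠ j2 → b ≠ j3 → f b = 0) :
    ∑ b ∈ Finset.range n, f b = f j1 + f j2 + f j3 := by
  have key : ∑ b ∈ ({j1, j2, j3} : Finset ℕ), f b = ∑ b ∈ Finset.range n, f b := by
    apply Finset.sum_subset
    · intro b hb
      simp only [Finset.mem_insert, Finset.mem_singleton] at hb
      simp only [Finset.mem_range]; omega
    · intro b hb hnb
      simp only [Finset.mem_insert, Finset.mem_singleton, not_or] at hnb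
      exact hz b (Finset.mem_range.mp hb) hnb.1 hnb.2.1 hnb.2.2
  rw [← key, Finset.sum_insert (by simp [h12, h13]), Finset.sum_insert (by simp [h23]),
    Finset.sum_singleton, add_assoc]

lemma sum_four (n j1 j2 j3 j4 : ℕ) (f : ℕ → ℝ) (h1 : j1 < n) (h2 : j2 < n) (h3 : j3 < n)
    (h4 : j4 < n) (h12 : j1 ≠ j2) (h13 : j1 ≠ j3) (h14 : j1 ≠ j4) (h23 : j2 ≠ j3)
    (h24 : j2 ≠ j4) (h34 : j3 ≠ j4)
    (hz : ∀ b, b < n → b ≠ j1 → b ≠ j2 → b ≠ j3 → b ≠ j4 → f b = 0) :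
    ∑ b ∈ Finset.range n, f b = f j1 + f j2 + f j3 + f j4 := by
  have key : ∑ b ∈ ({j1, j2, j3, j4} : Finset ℕ), f b = ∑ b ∈ Finset.range n, f b := by
    apply Finset.sum_subset
    · intro b hb
      simp only [Finset.mem_insert, Finset.mem_singleton] at hb
      simp only [Finset.mem_range]; omega
    · intro b hb hnb
      simp only [Finset.mem_insert, Finset.mem_singleton, not_or] at hnb
      exact hz b (Finset.mem_range.mp hb) hnb.1 hnb.2.1 hnb.2.2.1 hnb.2.2.2
  rw [← key, Finset.sum_insert (by simp [h12, h13, h14]),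
    Finset.sum_insert (by simp [h23, h24]), Finset.sum_insert (by simp [h34]),
    Finset.sum_singleton, add_assoc, add_assoc]

lemma key_sum (n : ℕ) (hn : 4 ≤ n) (ε : ℕ → ℝ)
    (hε : ∀ k : ℕ, k < n - 1 → ε k = 1 ∨ ε k = -1) (a : ℕ) (ha : a < n) :
    ∑ b ∈ Finset.range n, gmat n ε a b * yvec n ε b = -3 * yvec n ε a := by
  have hsq : ∀ k, k < n - 1 → ε k * ε k = 1 := by
    intro k hk; rcases hε k hk with h | h <;> rw [h] <;> norm_num
  by_cases h0 : a = 0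
  · subst h0
    rw [sum_two n 0 1 _ (by omega) (by omega) (by omega)
      (by intro b hb hb1 hb2
          unfold gmat
          split_ifs <;> first | (exfalso; omega) | (exfalso; simp_all <;> omega) | simp)]
    have e1 : gmat n ε 0 0 = -2 := by
      unfold gmat; split_ifs <;> first | rfl | (exfalso; omega) | (exfalso; simp_all <;> omega)
    have e2 : gmat n ε 0 1 = ε 0 := by
      unfold gmat; split_ifs <;> first | rfl | (exfalso; omega) | (exfalso; simp_all <;> omega)
    rw [e1, e2, yvec_step n hn ε 0 (by omega), zero_add]
    ring
  · by_cases h1 : a < n - 3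
    · rw [sum_three n (a - 1) a (a + 1) _ (by omega) (by omega) (by omega) (by omega)
        (by omega) (by omega)
        (by intro b hb hb1 hb2 hb3
            unfold gmat
            split_ifs <;> first | (exfalso; omega) | (exfalso; simp_all <;> omega) | simp)]
      have e1 : gmat n ε a (a - 1) = ε (a - 1) := by
        unfold gmat; split_ifs <;> first | rfl | (exfalso; omega) | (exfalso; simp_all <;> omega)
      have e2 : gmat n ε a a = -1 := by
        unfold gmat; split_ifs <;> first | rfl | (exfalso; omega) | (exfalso; simp_all <;> omega)
      have e3 : gmat n ε a (a + 1) = ε a := by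
        unfold gmat; split_ifs <;> first | rfl | (exfalso; omega) | (exfalso; simp_all <;> omega)
      have y1 : yvec n ε (a - 1) = -ε (a - 1) * yvec n ε a := by
        have h := yvec_step n hn ε (a - 1) (by omega)
        rwa [show a - 1 + 1 = a by omega] at h
      have y2 : yvec n ε a = -ε a * yvec n ε (a + 1) := yvec_step n hn ε a h1
      have hs : ε (a - 1) * ε (a - 1) = 1 := hsq (a - 1) (by omega)
      rw [e1, e2, e3, y1, y2]
      linear_combination (ε a * yvec n ε (a + 1)) * hs
    · by_cases h2 : a = n - 3
      · subst h2
        rw [sum_four n (n - 4) (n - 3) (n - 2) (n - 1) _ (by omega) (by omega) (by omega)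
          (by omega) (by omega) (by omega) (by omega) (by omega) (by omega) (by omega)
          (by intro b hb hb1 hb2 hb3 hb4
              unfold gmat
              split_ifs <;> first | (exfalso; omega) | (exfalso; simp_all <;> omega) | simp)]
        have e1 : gmat n ε (n - 3) (n - 4) = ε (n - 4) := by
          unfold gmat; split_ifs <;> first | rfl | (exfalso; omega) | (exfalso; simp_all <;> omega)
        have e2 : gmat n ε (n - 3) (n - 3) = -1 := by
          unfold gmat; split_ifs <;> first | rfl | (exfalso; omega) | (exfalso; simp_all <;> omega)
        have e3 : gmat n ε (n - 3) (n - 2) = ε (n - 3) := by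
          unfold gmat; split_ifs <;> first | rfl | (exfalso; omega) | (exfalso; simp_all <;> omega)
        have e4 : gmat n ε (n - 3) (n - 1) = ε (n - 2) := by
          unfold gmat; split_ifs <;> first | rfl | (exfalso; omega) | (exfalso; simp_all <;> omega)
        have y1 : yvec n ε (n - 4) = -ε (n - 4) * yvec n ε (n - 3) := by
          have h := yvec_step n hn ε (n - 4) (by omega)
          rwa [show n - 4 + 1 = n - 3 by omega] at h
        have hs1 : ε (n - 4) * ε (n - 4) = 1 := hsq (n - 4) (by omega)
        have hs2 : ε (n - 3) * ε (n - 3) = 1 := hsq (n - 3) (by omega)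
        have hs3 : ε (n - 2) * ε (n - 2) = 1 := hsq (n - 2) (by omega)
        rw [e1, e2, e3, e4, y1, yvec_top n hn, yvec_pen, yvec_last n hn]
        linear_combination (-2 : ℝ) * hs1 - hs2 - hs3
      · by_cases h3 : a = n - 2
        · subst h3
          rw [sum_two n (n - 3) (n - 2) _ (by omega) (by omega) (by omega)
            (by intro b hb hb1 hb2
                unfold gmat
                split_ifs <;> first | (exfalso; omega) | (exfalso; simp_all <;> omega) | simp)]
          have e1 : gmat n ε (n - 2) (n - 3) = ε (n - 3) := by
            unfold gmat; split_ifs <;> first | rfl | (exfalso; omega) | (exfalso; simp_all <;> omega)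
          have e2 : gmat n ε (n - 2) (n - 2) = -1 := by
            unfold gmat; split_ifs <;> first | rfl | (exfalso; omega) | (exfalso; simp_all <;> omega)
          rw [e1, e2, yvec_top n hn, yvec_pen]
          ring
        · have h4 : a = n - 1 := by omega
          subst h4
          rw [sum_two n (n - 3) (n - 1) _ (by omega) (by omega) (by omega)
            (by intro b hb hb1 hb2
                unfold gmat
                split_ifs <;> first | (exfalso; omega) | (exfalso; simp_all <;> omega) | simp)]
          have e1 : gmat n ε (n - 1) (n - 3) = ε (n - 2) := by
            unfold gmat; split_ifs <;> first | rfl | (exfalso; omega) | (exfalso; simp_all <;> omega)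
          have e2 : gmat n ε (n - 1) (n - 1) = -1 := by
            unfold gmat; split_ifs <;> first | rfl | (exfalso; omega) | (exfalso; simp_all <;> omega)
          rw [e1, e2, yvec_top n hn, yvec_last n hn]
          ring

/-- `D_n`-shaped signed matrix with first diagonal entry `-2` has `-3` as an
eigenvalue; in particular its smallest eigenvalue is at most `-3`.
(0-indexed: path `0,…,n-2` with extra vertex `n-1` attached to `n-3`.) -/
theorem stmt_7 (n : ℕ) (hn : 4 ≤ n) (ε : ℕ → ℝ)
    (hε : ∀ k : ℕ, k < n - 1 → ε k = 1 ∨ ε k = -1) :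
    let B : Matrix (Fin n) (Fin n) ℝ := Matrix.of fun i j =>
      if i = j then (if (i : ℕ) = 0 then -2 else -1)
      else if (j : ℕ) = (i : ℕ) + 1 ∧ (j : ℕ) ≤ n - 2 then ε (i : ℕ)
      else if (i : ℕ) = (j : ℕ) + 1 ∧ (i : ℕ) ≤ n - 2 then ε (j : ℕ)
      else if ((i : ℕ) = n - 3 ∧ (j : ℕ) = n - 1) ∨ ((j : ℕ) = n - 3 ∧ (i : ℕ) = n - 1)
        then ε (n - 2)
      else 0
    (∃ x : Fin n → ℝ, x ≠ 0 ∧ B.mulVec x = (-3 : ℝ) • x) ∧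
    ∃ (μ : ℝ) (x : Fin n → ℝ), x ≠ 0 ∧ B.mulVec x = μ • x ∧ μ ≤ -3 := by
  intro B
  have hBg : ∀ i j : Fin n, B i j = gmat n ε (i : ℕ) (j : ℕ) := by
    intro i j
    simp only [B, Matrix.of_apply, gmat, Fin.ext_iff]
  set x : Fin n → ℝ := fun i => yvec n ε (i : ℕ) with hx
  have hx0 : x ≠ 0 := by
    intro h
    have h2 := congrFun h ⟨n - 3, by omega⟩
    simp only [hx, Pi.zero_apply] at h2
    rw [yvec_top n hn] at h2
    norm_num at h2
  have hmv : B.mulVec x = (-3 : ℝ) • x := by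
    funext i
    have : B.mulVec x i = ∑ b ∈ Finset.range n, gmat n ε (i : ℕ) b * yvec n ε b := by
      rw [Matrix.mulVec, dotProduct]
      rw [← Fin.sum_univ_eq_sum_range (fun b => gmat n ε (i : ℕ) b * yvec n ε b) n]
      exact Finset.sum_congr rfl fun j _ => by rw [hBg]
    rw [this, key_sum n hn ε hε (i : ℕ) i.isLt]
    simp [hx, smul_eq_mul]
  exact ⟨⟨x, hx0, hmv⟩, ⟨-3, x, hx0, hmv, le_refl _⟩⟩
end

section
/- For all ε₁₂, ε₁₃, ε₂₃, ε₂₄, ε₃₄ ∈ {±1}, the 4×4 real symmetric matrix [[-2, ε₁₂, ε₁₃, 0], [ε₁₂, -1, ε₂₃, ε₂₄], [ε₁₃, ε₂₃, -1, ε₃₄], [0, ε₂₄, ε₃₄, -1]] has smallest eigenvalue at most -3. -/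
open Matrix

lemma det_fin_four_aux (M : Matrix (Fin 4) (Fin 4) ℝ) :
    M.det =
      M 0 0 * (M 1 1 * (M 2 2 * M 3 3 - M 2 3 * M 3 2) - M 1 2 * (M 2 1 * M 3 3 - M 2 3 * M 3 1)
        + M 1 3 * (M 2 1 * M 3 2 - M 2 2 * M 3 1))
      - M 0 1 * (M 1 0 * (M 2 2 * M 3 3 - M 2 3 * M 3 2) - M 1 2 * (M 2 0 * M 3 3 - M 2 3 * M 3 0)
        + M 1 3 * (M 2 0 * M 3 2 - M 2 2 * M 3 0))
      + M 0 2 * (M 1 0 * (M 2 1 * M 3 3 - M 2 3 * M 3 1) - M 1 1 * (M 2 0 * M 3 3 - M 2 3 * M 3 0)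
        + M 1 3 * (M 2 0 * M 3 1 - M 2 1 * M 3 0))
      - M 0 3 * (M 1 0 * (M 2 1 * M 3 2 - M 2 2 * M 3 1) - M 1 1 * (M 2 0 * M 3 2 - M 2 2 * M 3 0)
        + M 1 2 * (M 2 0 * M 3 1 - M 2 1 * M 3 0)) := by
  simp [Matrix.det_succ_row_zero, Fin.sum_univ_succ, Fin.succAbove,
    show ((2:Fin 3).succ) = 3 from rfl, show Fin.castSucc (2:Fin 3) = 2 from rfl]
  ring

lemma det_add_smul_one_aux {n : Type*} [Fintype n] [DecidableEq n] {A : Matrix n n ℝ}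
    (hA : A.IsHermitian) (c : ℝ) :
    (A + c • (1 : Matrix n n ℝ)).det = ∏ i, (hA.eigenvalues i + c) := by
  have hU : (hA.eigenvectorUnitary : Matrix n n ℝ) * star (hA.eigenvectorUnitary : Matrix n n ℝ)
      = 1 := (Matrix.mem_unitaryGroup_iff).mp hA.eigenvectorUnitary.2
  have key : A + c • (1 : Matrix n n ℝ)
      = (hA.eigenvectorUnitary : Matrix n n ℝ)
        * (diagonal (fun i => hA.eigenvalues i + c))
        * star (hA.eigenvectorUnitary : Matrix n n ℝ) := by
    conv_lhs => rw [hA.spectral_theorem]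
    have : diagonal (fun i => hA.eigenvalues i + c)
        = diagonal (RCLike.ofReal ∘ hA.eigenvalues) + c • (1 : Matrix n n ℝ) := by
      rw [Matrix.smul_one_eq_diagonal, ← Matrix.diagonal_add]
      rfl
    rw [Unitary.conjStarAlgAut_apply, this, mul_add, add_mul, Matrix.mul_smul, Matrix.smul_mul, mul_one, hU]
  rw [key, Matrix.det_mul_right_comm, hU, one_mul, Matrix.det_diagonal]

theorem stmt_12 (ε₁₂ ε₁₃ ε₂₃ ε₂₄ ε₃₄ : ℝ)
    (h₁₂ : ε₁₂ = 1 ∨ ε₁₂ = -1) (h₁₃ : ε₁₃ = 1 ∨ ε₁₃ = -1) (h₂₃ : ε₂₃ = 1 ∨ ε₂₃ = -1)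
    (h₂₄ : ε₂₄ = 1 ∨ ε₂₄ = -1) (h₃₄ : ε₃₄ = 1 ∨ ε₃₄ = -1) :
    ∃ (μ : ℝ) (x : Fin 4 → ℝ), x ≠ 0 ∧
      (!![-2, ε₁₂, ε₁₃, 0; ε₁₂, -1, ε₂₃, ε₂₄; ε₁₃, ε₂₃, -1, ε₃₄; 0, ε₂₄, ε₃₄, -1] :
        Matrix (Fin 4) (Fin 4) ℝ).mulVec x = μ • x ∧ μ ≤ -3 := by
  set A : Matrix (Fin 4) (Fin 4) ℝ :=
    !![-2, ε₁₂, ε₁₃, 0; ε₁₂, -1, ε₂₃, ε₂₄; ε₁₃, ε₂₃, -1, ε₃₄; 0, ε₂₄, ε₃₄, -1] with hAdef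
  have hA : A.IsHermitian := by
    refine Matrix.IsHermitian.ext fun i j => ?_
    fin_cases i <;> fin_cases j <;> simp [hAdef]
  have hdet : (A + (3 : ℝ) • (1 : Matrix (Fin 4) (Fin 4) ℝ)).det ≤ 0 := by
    have hB : A + (3 : ℝ) • (1 : Matrix (Fin 4) (Fin 4) ℝ)
        = !![1, ε₁₂, ε₁₃, 0; ε₁₂, 2, ε₂₃, ε₂₄; ε₁₃, ε₂₃, 2, ε₃₄; 0, ε₂₄, ε₃₄, 2] := by
      ext i j
      fin_cases i <;> fin_cases j <;>
        simp [hAdef, Matrix.one_apply] <;> norm_num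
    rw [hB, det_fin_four_aux]
    simp
    rcases h₁₂ with h | h <;> rcases h₁₃ with h' | h' <;> rcases h₂₃ with h'' | h'' <;>
      rcases h₂₄ with h''' | h''' <;> rcases h₃₄ with h'''' | h'''' <;>
      subst h h' h'' h''' h'''' <;> norm_num
  have hex : ∃ i, hA.eigenvalues i ≤ -3 := by
    by_contra hc
    push_neg at hc
    have hpos : 0 < ∏ i, (hA.eigenvalues i + 3) :=
      Finset.prod_pos fun i _ => by linarith [hc i]
    rw [← det_add_smul_one_aux hA 3] at hpos
    linarith
  obtain ⟨i, hi⟩ := hex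
  refine ⟨hA.eigenvalues i, ⇑(hA.eigenvectorBasis i), ?_, hA.mulVec_eigenvectorBasis i, hi⟩
  intro h
  exact hA.eigenvectorBasis.orthonormal.ne_zero i (by ext j; exact congrFun h j)
end

section
/- If a graph G contains neither the diamond graph K_{1,1,2} nor any cycle of length at least 4 as an induced subgraph, then every block of G is a clique (i.e., G is a block graph). -/
open SimpleGraph

/-- A set of vertices induces a connected subgraph with no cut vertex. -/
def NoCutVertexSet {V : Type*} (G : SimpleGraph V) (s : Set V) : Prop :=
  (G.induce s).Connected ∧
    ∀ v : s, ((G.induce s).induce {u : s | u ≠ v}).Preconnected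

/-- A block of `G`: a maximal set of vertices inducing a connected subgraph without
cut vertices. -/
def IsBlock {V : Type*} (G : SimpleGraph V) (s : Set V) : Prop :=
  NoCutVertexSet G s ∧ ∀ t : Set V, s ⊆ t → NoCutVertexSet G t → s = t

/-- The diamond graph `K_{1,1,2}`: `K₄` minus the edge `{2,3}`. -/
def diamondGraph : SimpleGraph (Fin 4) :=
  SimpleGraph.fromRel fun a b => ¬(a = 2 ∧ b = 3) ∧ ¬(a = 3 ∧ b = 2)

/-- The cycle of length `n` on `ZMod n`. -/
def cycleGraph' (n : ℕ) : SimpleGraph (ZMod n) :=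
  SimpleGraph.fromRel fun a b => a - b = 1

open SimpleGraph.Walk

section Aux

variable {V : Type*} {G : SimpleGraph V}


lemma support_getElem' {u v : V} (W : G.Walk u v) : ∀ (i : ℕ) (h : i < W.support.length),
    W.support[i] = W.getVert i := by
  induction W with
  | nil =>
    intro i h
    simp only [Walk.support_nil, List.length_singleton] at h
    have : i = 0 := by omega
    subst this; rfl
  | cons h p ih =>
    intro i hi
    cases i with
    | zero => simp
    | succ n =>
      simp only [Walk.support_cons, List.getElem_cons_succ, Walk.getVert_cons_succ]
      exact ih n (by simp only [Walk.support_cons, List.length_cons] at hi; omega)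

lemma support_tail_length {u v : V} (W : G.Walk u v) : W.support.tail.length = W.length := by
  have h := W.length_support
  rw [W.support_eq_cons] at h
  simp only [List.length_cons] at h
  omega

lemma tail_getElem {u v : V} (W : G.Walk u v) (k : ℕ) (hk1 : 1 ≤ k) (hk : k ≤ W.length) :
    W.support.tail[k-1]'(by rw [support_tail_length]; omega) = W.getVert k := by
  have h2 : W.support.tail[k-1]'(by rw [support_tail_length]; omega)
      = W.support[k]'(by rw [W.length_support]; omega) := by
    rw [List.getElem_tail]
    congr 1
    omega
  rw [h2, support_getElem']

lemma cycle_getVert_inj {x : V} {W : G.Walk x x} (hW : W.IsCycle) {i j : ℕ}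
    (hi : i < W.length) (hj : j < W.length) (h : W.getVert i = W.getVert j) : i = j := by
  have hnd : W.support.tail.Nodup := hW.2
  have hpos : 3 ≤ W.length := hW.three_le_length
  have key : ∀ k, 1 ≤ k → k ≤ W.length → W.getVert k = x → k = W.length := by
    intro k h1 h2 hx
    have e1 := tail_getElem W k h1 h2
    have e2 := tail_getElem W W.length (by omega) le_rfl
    rw [W.getVert_length] at e2
    rw [hx] at e1
    have e3 : W.support.tail[k-1]'(by rw [support_tail_length]; omega)
        = W.support.tail[W.length-1]'(by rw [support_tail_length]; omega) := by rw [e1, e2]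
    have := (List.Nodup.getElem_inj_iff hnd).mp e3
    omega
  rcases Nat.eq_zero_or_pos i with hi0 | hi1 <;> rcases Nat.eq_zero_or_pos j with hj0 | hj1
  · omega
  · subst hi0
    rw [W.getVert_zero] at h
    have := key j hj1 (le_of_lt hj) h.symm
    omega
  · subst hj0
    rw [W.getVert_zero] at h
    have := key i hi1 (le_of_lt hi) h
    omega
  · have e1 := tail_getElem W i hi1 (le_of_lt hi)
    have e2 := tail_getElem W j hj1 (le_of_lt hj)
    rw [← e1, ← e2] at h
    have := (List.Nodup.getElem_inj_iff hnd).mp h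
    omega


lemma mem_edges_getVert {u v a b : V} (W : G.Walk u v) (h : s(a,b) ∈ W.edges) :
    ∃ k < W.length, (W.getVert k = a ∧ W.getVert (k+1) = b) ∨
      (W.getVert k = b ∧ W.getVert (k+1) = a) := by
  induction W with
  | nil => simp at h
  | @cons u' v' w' hadj p ih =>
    rw [Walk.edges_cons, List.mem_cons] at h
    rcases h with h | h
    · refine ⟨0, by simp, ?_⟩
      rw [Sym2.eq_iff] at h
      rcases h with ⟨rfl, rfl⟩ | ⟨rfl, rfl⟩
      · left; constructor
        · rfl
        · rw [Walk.getVert_cons_succ, Walk.getVert_zero]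
      · right; constructor
        · rfl
        · rw [Walk.getVert_cons_succ, Walk.getVert_zero]
    · obtain ⟨k, hk, hcase⟩ := ih h
      exact ⟨k + 1, by simp [Walk.length_cons]; omega, by
        simpa only [Walk.getVert_cons_succ] using hcase⟩

lemma cycle_adj_mod {x : V} (W : G.Walk x x) (hn : 0 < W.length) {k : ℕ} (hk : k < W.length) :
    G.Adj (W.getVert k) (W.getVert ((k+1) % W.length)) := by
  rcases Nat.lt_or_ge (k+1) W.length with h | h
  · rw [Nat.mod_eq_of_lt h]
    exact W.adj_getVert_succ hk
  · have hkk : k + 1 = W.length := by omega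
    have : (k+1) % W.length = 0 := by rw [hkk]; exact Nat.mod_self _
    rw [this, Walk.getVert_zero]
    have h2 := W.adj_getVert_succ hk
    rwa [hkk, W.getVert_length] at h2

lemma start_mem_support_tail {z : V} (d : G.Walk z z) (h : 0 < d.length) :
    z ∈ d.support.tail := by
  have e := tail_getElem d d.length (by omega) le_rfl
  rw [d.getVert_length] at e
  have hm : d.support.tail[d.length - 1]'(by rw [support_tail_length]; omega) ∈ d.support.tail :=
    List.getElem_mem _
  rwa [e] at hm

lemma mem_support_iff_mem_tail {z y : V} (d : G.Walk z z) (h : 0 < d.length) :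
    y ∈ d.support ↔ y ∈ d.support.tail := by
  constructor
  · intro hy
    rw [d.support_eq_cons, List.mem_cons] at hy
    rcases hy with rfl | hy
    · exact start_mem_support_tail d h
    · exact hy
  · intro hy
    rw [d.support_eq_cons, List.mem_cons]
    exact Or.inr hy

lemma length_rotate' [DecidableEq V] {x p : V} (c : G.Walk x x) (hp : p ∈ c.support) :
    (c.rotate p hp).length = c.length := by
  rw [Walk.rotate, Walk.length_append, Nat.add_comm, ← Walk.length_append, c.take_spec hp]

lemma mem_support_rotate_iff [DecidableEq V] {x p y : V} (c : G.Walk x x) (h : 0 < c.length)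
    (hp : p ∈ c.support) : y ∈ (c.rotate p hp).support ↔ y ∈ c.support := by
  rw [mem_support_iff_mem_tail _ (by rw [length_rotate']; exact h),
    mem_support_iff_mem_tail _ h]
  exact (Walk.support_rotate c p hp).mem_iff

lemma cycle_split_paths [DecidableEq V] {p q : V} {W : G.Walk p p} (hW : W.IsCycle)
    (hq : q ∈ W.support) (hne : q ≠ p) :
    (W.takeUntil q hq).IsPath ∧ (W.dropUntil q hq).IsPath := by
  have hnd : W.support.tail.Nodup := hW.2
  set A := (W.takeUntil q hq).support with hA
  set B := (W.dropUntil q hq).support with hB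
  have hsplit : A ++ B.tail = W.support := by
    rw [hA, hB, ← Walk.support_append, W.take_spec hq]
  have hAcons : A = p :: A.tail := (W.takeUntil q hq).support_eq_cons
  have htail : A.tail ++ B.tail = W.support.tail := by
    rw [← hsplit, hAcons]; rfl
  have hnd2 : (A.tail ++ B.tail).Nodup := htail ▸ hnd
  have hdisj := (List.nodup_append.mp hnd2).2.2
  have hndA : A.tail.Nodup := (List.nodup_append.mp hnd2).1
  have hndB : B.tail.Nodup := (List.nodup_append.mp hnd2).2.1
  have hBcons : B = q :: B.tail := (W.dropUntil q hq).support_eq_cons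
  have hpB : p ∈ B.tail := by
    have : p ∈ B := (W.dropUntil q hq).end_mem_support
    rw [hBcons, List.mem_cons] at this
    rcases this with h | h
    · exact absurd h.symm hne
    · exact h
  have hqA : q ∈ A.tail := by
    have : q ∈ A := (W.takeUntil q hq).end_mem_support
    rw [hAcons, List.mem_cons] at this
    rcases this with h | h
    · exact absurd h hne
    · exact h
  constructor
  · rw [Walk.isPath_def, ← hA, hAcons, List.nodup_cons]
    exact ⟨fun hpA => hdisj p hpA p hpB rfl, hndA⟩
  · rw [Walk.isPath_def, ← hB, hBcons, List.nodup_cons]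
    exact ⟨fun hqB => hdisj q hqA q hqB rfl, hndB⟩

lemma edge_mem_of_length_one {a b : V} (P : G.Walk a b) (h : P.length = 1) :
    s(a,b) ∈ P.edges := by
  match P with
  | .nil => simp at h
  | .cons h' .nil => simp
  | .cons h' (.cons h'' P') => simp [Walk.length_cons] at h



lemma diamond_of_adj {p q u v : V} (hpq : G.Adj p q) (hpu : G.Adj p u) (hqu : G.Adj q u)
    (hpv : G.Adj p v) (hqv : G.Adj q v) (huv : ¬ G.Adj u v) (hne : u ≠ v) :
    ∃ s : Set V, Nonempty (G.induce s ≃g diamondGraph) := by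
  haveI := Classical.decEq V
  have h1 : p ≠ q := hpq.ne
  have h2 : p ≠ u := hpu.ne
  have h3 : q ≠ u := hqu.ne
  have h4 : p ≠ v := hpv.ne
  have h5 : q ≠ v := hqv.ne
  refine ⟨{p, q, u, v}, ⟨?_⟩⟩
  refine RelIso.symm ?_
  refine ⟨⟨![⟨p, by simp⟩, ⟨q, by simp⟩, ⟨u, by simp⟩, ⟨v, by simp⟩],
    fun y => if y.1 = p then 0 else if y.1 = q then 1 else if y.1 = u then 2 else 3,
    ?_, ?_⟩, ?_⟩
  · intro i
    fin_cases i <;> simp [h1.symm, h2.symm, h3.symm, h4.symm, h5.symm, hne.symm, h1, h2, h3, h4, h5, hne]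
  · rintro ⟨y, hy⟩
    rcases hy with rfl | rfl | rfl | hy
    · simp
    · simp [h1.symm]
    · simp [h2.symm, h3.symm]
    · rw [Set.mem_singleton_iff] at hy
      subst hy
      simp [h4.symm, h5.symm, hne.symm]
  · intro i j
    fin_cases i <;> fin_cases j <;>
      simp [diamondGraph, SimpleGraph.fromRel_adj, comap_adj, hpq, hpu, hpv, hqu, hqv,
        hpq.symm, hpu.symm, hpv.symm, hqu.symm, hqv.symm, huv,
        h1, h2, h3, h4, h5, hne, G.irrefl] <;>
      first
        | exact fun h => huv (G.adj_symm h)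
        | decide
        | omega

lemma induced_cycle_of_nochord {x : V} (W : G.Walk x x) (hW : W.IsCycle) (hn : 4 ≤ W.length)
    (hchord : ∀ p q, p ∈ W.support → q ∈ W.support → G.Adj p q → s(p,q) ∈ W.edges) :
    ∃ s : Set V, Nonempty (G.induce s ≃g cycleGraph' W.length) := by
  set n := W.length with hn'
  haveI : NeZero n := ⟨by omega⟩
  set S : Set V := {y | y ∈ W.support} with hS
  have hmemg : ∀ i : ZMod n, W.getVert i.val ∈ S :=
    fun i => Walk.mem_support_iff_exists_getVert.mpr ⟨i.val, rfl, (ZMod.val_lt i).le⟩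
  set g : ZMod n → ↥S := fun i => ⟨W.getVert i.val, hmemg i⟩ with hg
  have hvalinj : ∀ i j : ZMod n, i.val = j.val → i = j := by
    intro i j h
    have := congrArg (Nat.cast : ℕ → ZMod n) h
    rwa [ZMod.natCast_zmod_val, ZMod.natCast_zmod_val] at this
  have hinj : Function.Injective g := by
    intro i j h
    rw [hg, Subtype.mk.injEq] at h
    exact hvalinj i j (cycle_getVert_inj hW (ZMod.val_lt i) (ZMod.val_lt j) h)
  have hsurj : Function.Surjective g := by
    rintro ⟨y, hy⟩
    obtain ⟨k, hk, hkle⟩ := Walk.mem_support_iff_exists_getVert.mp hy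
    refine ⟨(k : ZMod n), Subtype.ext ?_⟩
    show W.getVert ((k : ZMod n)).val = y
    rw [ZMod.val_natCast]
    rcases Nat.lt_or_ge k n with h | h
    · rw [Nat.mod_eq_of_lt h]; exact hk
    · have hkn : k = n := by omega
      subst hkn
      rw [Nat.mod_self, Walk.getVert_zero, ← W.getVert_length]
      exact hk
  have hmod : ∀ j : ZMod n, (j + 1).val = (j.val + 1) % n := by
    intro j
    have h1n : (1 : ZMod n).val = 1 := by
      rw [ZMod.val_one_eq_one_mod]
      exact Nat.mod_eq_of_lt (by omega)
    rw [ZMod.val_add, h1n]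
  have hcadj : ∀ a b : ZMod n, (cycleGraph' n).Adj a b ↔ a ≠ b ∧ (a - b = 1 ∨ b - a = 1) := by
    intro a b
    rw [cycleGraph', SimpleGraph.fromRel_adj]
  have hiff : ∀ i j : ZMod n, G.Adj (W.getVert i.val) (W.getVert j.val) ↔
      (cycleGraph' n).Adj i j := by
    intro i j
    rw [hcadj]
    constructor
    · intro hadj
      have hij : i ≠ j := by
        rintro rfl; exact G.irrefl hadj
      refine ⟨hij, ?_⟩
      have hedge := hchord _ _ (hmemg i) (hmemg j) hadj
      obtain ⟨k, hk, hcase⟩ := mem_edges_getVert W hedge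
      have hvi := ZMod.val_lt i
      have hvj := ZMod.val_lt j
      rcases hcase with ⟨ha, hb⟩ | ⟨ha, hb⟩
      · -- getVert k = getVert i.val, getVert (k+1) = getVert j.val
        have hik : i.val = k := cycle_getVert_inj hW hvi hk ha.symm
        rcases Nat.lt_or_ge (k+1) n with h1 | h1
        · have hjk : j.val = k + 1 := cycle_getVert_inj hW hvj h1 hb.symm
          right
          have : j = i + 1 := by
            apply hvalinj
            rw [hmod i, hik, hjk, Nat.mod_eq_of_lt h1]
          rw [this]; ring
        · have hkn : k + 1 = n := by omega
          have hb0 : W.getVert j.val = W.getVert 0 := by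
            rw [← hb, hkn, hn', W.getVert_length, W.getVert_zero]
          have hj0 : j.val = 0 := cycle_getVert_inj hW hvj (by omega) hb0
          have hj : j = 0 := hvalinj j 0 (by rw [hj0, ZMod.val_zero])
          right
          have hi : i = ((n - 1 : ℕ) : ZMod n) := by
            apply hvalinj
            rw [ZMod.val_natCast, Nat.mod_eq_of_lt (by omega), hik]
            omega
          rw [hj, hi, zero_sub]
          have h9 : ((n - 1) + 1 : ℕ) = n := by omega
          have h8 : ((n - 1 : ℕ) : ZMod n) + 1 = 0 := by
            have := congrArg (Nat.cast : ℕ → ZMod n) h9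
            rw [Nat.cast_add, Nat.cast_one, ZMod.natCast_self] at this
            exact this
          have h2 : ((n - 1 : ℕ) : ZMod n) = -1 := eq_neg_of_add_eq_zero_left h8
          rw [h2, neg_neg]
      · -- symmetric
        have hik : j.val = k := cycle_getVert_inj hW hvj hk ha.symm
        rcases Nat.lt_or_ge (k+1) n with h1 | h1
        · have hjk : i.val = k + 1 := cycle_getVert_inj hW hvi h1 hb.symm
          left
          have : i = j + 1 := by
            apply hvalinj
            rw [hmod j, hik, hjk, Nat.mod_eq_of_lt h1]
          rw [this]; ring
        · have hkn : k + 1 = n := by omega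
          have hb0 : W.getVert i.val = W.getVert 0 := by
            rw [← hb, hkn, hn', W.getVert_length, W.getVert_zero]
          have hi0 : i.val = 0 := cycle_getVert_inj hW hvi (by omega) hb0
          have hi : i = 0 := hvalinj i 0 (by rw [hi0, ZMod.val_zero])
          left
          have hj : j = ((n - 1 : ℕ) : ZMod n) := by
            apply hvalinj
            rw [ZMod.val_natCast, Nat.mod_eq_of_lt (by omega), hik]
            omega
          rw [hi, hj, zero_sub]
          have h9 : ((n - 1) + 1 : ℕ) = n := by omega
          have h8 : ((n - 1 : ℕ) : ZMod n) + 1 = 0 := by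
            have := congrArg (Nat.cast : ℕ → ZMod n) h9
            rw [Nat.cast_add, Nat.cast_one, ZMod.natCast_self] at this
            exact this
          have h2 : ((n - 1 : ℕ) : ZMod n) = -1 := eq_neg_of_add_eq_zero_left h8
          rw [h2, neg_neg]
    · rintro ⟨hij, h1 | h1⟩
      · -- i - j = 1, so i = j + 1
        have hi : i = j + 1 := by
          have h7 := sub_eq_iff_eq_add.mp h1
          rw [h7]; ring
        have : i.val = (j.val + 1) % n := by rw [hi, hmod]
        rw [this]
        exact (cycle_adj_mod W (by omega) (ZMod.val_lt j)).symm
      · have hj : j = i + 1 := by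
          have h7 := sub_eq_iff_eq_add.mp h1
          rw [h7]; ring
        have : j.val = (i.val + 1) % n := by rw [hj, hmod]
        rw [this]
        exact cycle_adj_mod W (by omega) (ZMod.val_lt i)
  refine ⟨S, ⟨RelIso.symm ⟨Equiv.ofBijective g ⟨hinj, hsurj⟩, ?_⟩⟩⟩
  intro i j
  show (G.induce S).Adj (g i) (g j) ↔ (cycleGraph' n).Adj i j
  rw [← hiff i j]
  rfl

lemma cycle_support_clique
    (hdiamond : ¬ ∃ s : Set V, Nonempty (G.induce s ≃g diamondGraph))
    (hcycle : ∀ n : ℕ, 4 ≤ n → ¬ ∃ s : Set V, Nonempty (G.induce s ≃g cycleGraph' n)) :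
    ∀ (n : ℕ) {x : V} (W : G.Walk x x), W.IsCycle → W.length = n →
      ∀ {u v : V}, u ∈ W.support → v ∈ W.support → u ≠ v → G.Adj u v := by
  intro n
  induction n using Nat.strong_induction_on with
  | _ n IH =>
  intro x W hW hlen u v hu hv huv
  by_contra hne
  classical
  have hlen3 : 3 ≤ W.length := hW.three_le_length
  by_cases hchord : ∃ p q, p ∈ W.support ∧ q ∈ W.support ∧ G.Adj p q ∧ s(p,q) ∉ W.edges
  · obtain ⟨p, q, hp, hq, hpq, hpqe⟩ := hchord
    set W1 := W.rotate p hp with hW1def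
    have hW1 : W1.IsCycle := hW.rotate hp
    have hmemW1 : ∀ y, y ∈ W1.support ↔ y ∈ W.support :=
      fun y => mem_support_rotate_iff W (by omega) hp
    have hq1 : q ∈ W1.support := (hmemW1 q).mpr hq
    have hqp : q ≠ p := hpq.ne'
    obtain ⟨hP1, hP2⟩ := cycle_split_paths hW1 hq1 hqp
    set P1 := W1.takeUntil q hq1 with hP1def
    set P2 := W1.dropUntil q hq1 with hP2def
    have hedgesW1 : ∀ e, e ∈ W1.edges ↔ e ∈ W.edges := fun e => (W.rotate_edges p hp).mem_iff
    have hlensum : P1.length + P2.length = W.length := by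
      have h0 := congrArg Walk.length (W1.take_spec hq1)
      rw [Walk.length_append] at h0
      rw [← length_rotate' W hp]
      exact h0
    have hP1ne : P1.length ≠ 0 := by
      intro h0
      exact hqp (Walk.eq_of_length_eq_zero h0).symm
    have hP2ne : P2.length ≠ 0 := by
      intro h0
      exact hqp (Walk.eq_of_length_eq_zero h0)
    have hP1ne1 : P1.length ≠ 1 := by
      intro h1
      exact hpqe ((hedgesW1 _).mp (Walk.edges_takeUntil_subset _ _ (edge_mem_of_length_one P1 h1)))
    have hP2ne1 : P2.length ≠ 1 := by
      intro h1
      have := Walk.edges_dropUntil_subset _ hq1 (edge_mem_of_length_one P2 h1)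
      rw [Sym2.eq_swap] at this
      exact hpqe ((hedgesW1 _).mp this)
    set C1 := Walk.cons hpq.symm P1 with hC1def
    set C2 := Walk.cons hpq P2 with hC2def
    have hC1cyc : C1.IsCycle := by
      rw [hC1def, Walk.cons_isCycle_iff]
      refine ⟨hP1, fun hmem => ?_⟩
      have := Walk.edges_takeUntil_subset _ hq1 hmem
      rw [Sym2.eq_swap] at this
      exact hpqe ((hedgesW1 _).mp this)
    have hC2cyc : C2.IsCycle := by
      rw [hC2def, Walk.cons_isCycle_iff]
      exact ⟨hP2, fun hmem => hpqe ((hedgesW1 _).mp (Walk.edges_dropUntil_subset _ hq1 hmem))⟩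
    have hC1len : C1.length < n := by
      rw [hC1def, Walk.length_cons]
      omega
    have hC2len : C2.length < n := by
      rw [hC2def, Walk.length_cons]
      omega
    have hcov : ∀ y, y ∈ W.support → y ∈ C1.support ∨ y ∈ C2.support := by
      intro y hy
      have hy1 : y ∈ W1.support := (hmemW1 y).mpr hy
      rw [← W1.take_spec hq1, Walk.mem_support_append_iff] at hy1
      rcases hy1 with h | h
      · exact Or.inl (by rw [hC1def, Walk.support_cons]; exact List.mem_cons_of_mem _ h)
      · exact Or.inr (by rw [hC2def, Walk.support_cons]; exact List.mem_cons_of_mem _ h)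
    have hpC1 : p ∈ C1.support := by
      rw [hC1def, Walk.support_cons]
      exact List.mem_cons_of_mem _ P1.start_mem_support
    have hqC1 : q ∈ C1.support := C1.start_mem_support
    have hpC2 : p ∈ C2.support := C2.start_mem_support
    have hqC2 : q ∈ C2.support := by
      rw [hC2def, Walk.support_cons]
      exact List.mem_cons_of_mem _ P2.start_mem_support
    by_cases hu1 : u ∈ C1.support <;> by_cases hv1 : v ∈ C1.support
    · exact hne (IH _ hC1len C1 hC1cyc rfl hu1 hv1 huv)
    · have hv2 : v ∈ C2.support := (hcov v hv).resolve_left hv1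
      by_cases hu2 : u ∈ C2.support
      · exact hne (IH _ hC2len C2 hC2cyc rfl hu2 hv2 huv)
      · have hup : u ≠ p := fun h => hu2 (h ▸ hpC2)
        have huq : u ≠ q := fun h => hu2 (h ▸ hqC2)
        have hvp : v ≠ p := fun h => hv1 (h ▸ hpC1)
        have hvq : v ≠ q := fun h => hv1 (h ▸ hqC1)
        have hpu : G.Adj p u := IH _ hC1len C1 hC1cyc rfl hpC1 hu1 (Ne.symm hup)
        have hqu : G.Adj q u := IH _ hC1len C1 hC1cyc rfl hqC1 hu1 (Ne.symm huq)
        have hpv : G.Adj p v := IH _ hC2len C2 hC2cyc rfl hpC2 hv2 (Ne.symm hvp)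
        have hqv : G.Adj q v := IH _ hC2len C2 hC2cyc rfl hqC2 hv2 (Ne.symm hvq)
        exact hdiamond (diamond_of_adj hpq hpu hqu hpv hqv hne huv)
    · have hu2 : u ∈ C2.support := (hcov u hu).resolve_left hu1
      by_cases hv2 : v ∈ C2.support
      · exact hne (IH _ hC2len C2 hC2cyc rfl hu2 hv2 huv)
      · have hvp : v ≠ p := fun h => hv2 (h ▸ hpC2)
        have hvq : v ≠ q := fun h => hv2 (h ▸ hqC2)
        have hup : u ≠ p := fun h => hu1 (h ▸ hpC1)
        have huq : u ≠ q := fun h => hu1 (h ▸ hqC1)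
        have hpv : G.Adj p v := IH _ hC1len C1 hC1cyc rfl hpC1 hv1 (Ne.symm hvp)
        have hqv : G.Adj q v := IH _ hC1len C1 hC1cyc rfl hqC1 hv1 (Ne.symm hvq)
        have hpu : G.Adj p u := IH _ hC2len C2 hC2cyc rfl hpC2 hu2 (Ne.symm hup)
        have hqu : G.Adj q u := IH _ hC2len C2 hC2cyc rfl hqC2 hu2 (Ne.symm huq)
        exact hdiamond (diamond_of_adj hpq hpv hqv hpu hqu (fun h => hne (G.adj_symm h)) (Ne.symm huv))
    · exact hne (IH _ hC2len C2 hC2cyc rfl ((hcov u hu).resolve_left hu1)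
        ((hcov v hv).resolve_left hv1) huv)
  · push_neg at hchord
    rcases Nat.lt_or_ge W.length 4 with h4 | h4
    · have hl3 : W.length = 3 := by omega
      have hidx : ∀ y, y ∈ W.support → ∃ k, k < 3 ∧ W.getVert k = y := by
        intro y hy
        obtain ⟨k, hky, hkle⟩ := Walk.mem_support_iff_exists_getVert.mp hy
        rw [hl3] at hkle
        rcases Nat.lt_or_ge k 3 with h | h
        · exact ⟨k, h, hky⟩
        · have : k = 3 := by omega
          subst this
          refine ⟨0, by omega, ?_⟩
          rw [Walk.getVert_zero, ← W.getVert_length, hl3]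
          exact hky
      obtain ⟨i, hi3, hgi⟩ := hidx u hu
      obtain ⟨j, hj3, hgj⟩ := hidx v hv
      have hij : i ≠ j := by
        rintro rfl
        exact huv (hgi ▸ hgj ▸ rfl)
      have h01 : G.Adj (W.getVert 0) (W.getVert 1) := by
        have := cycle_adj_mod W (by omega) (show (0:ℕ) < W.length by omega)
        simpa [hl3] using this
      have h12 : G.Adj (W.getVert 1) (W.getVert 2) := by
        have := cycle_adj_mod W (by omega) (show (1:ℕ) < W.length by omega)
        simpa [hl3] using this
      have h20 : G.Adj (W.getVert 2) (W.getVert 0) := by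
        have := cycle_adj_mod W (by omega) (show (2:ℕ) < W.length by omega)
        simpa [hl3] using this
      apply hne
      rw [← hgi, ← hgj]
      rcases (by omega : i = 0 ∨ i = 1 ∨ i = 2) with rfl | rfl | rfl <;>
        rcases (by omega : j = 0 ∨ j = 1 ∨ j = 2) with rfl | rfl | rfl <;>
        first
          | exact absurd rfl hij
          | exact h01
          | exact h12
          | exact h20
          | exact h01.symm
          | exact h12.symm
          | exact h20.symm
    · exact hcycle W.length h4 (induced_cycle_of_nochord W hW h4 hchord)


end Aux

theorem stmt_13 {V : Type*} (G : SimpleGraph V)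
    (hdiamond : ¬ ∃ s : Set V, Nonempty (G.induce s ≃g diamondGraph))
    (hcycle : ∀ n : ℕ, 4 ≤ n → ¬ ∃ s : Set V, Nonempty (G.induce s ≃g cycleGraph' n)) :
    ∀ s : Set V, IsBlock G s → G.IsClique s := by
  classical
  intro s hblock
  obtain ⟨⟨hconn, hcut⟩, _⟩ := hblock
  have key : ∀ (d : ℕ) (A B : ↥s), A ≠ B → (G.induce s).dist A B ≤ d → (G.induce s).Adj A B := by
    intro d
    induction d with
    | zero =>
      intro A B hAB hd
      have hpos := (hconn.preconnected A B).pos_dist_of_ne hAB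
      omega
    | succ d IHd =>
      intro A B hAB hd
      obtain ⟨W0, hW0⟩ := hconn.exists_walk_length_eq_dist A B
      have hdpos : 0 < (G.induce s).dist A B := (hconn.preconnected A B).pos_dist_of_ne hAB
      rcases Nat.lt_or_ge ((G.induce s).dist A B) 2 with h2 | h2
      · have h1 : W0.length = 1 := by omega
        have hadj := W0.adj_getVert_succ (by omega : 0 < W0.length)
        rw [Walk.getVert_zero] at hadj
        have hB : W0.getVert 1 = B := by rw [← h1]; exact W0.getVert_length
        rwa [hB] at hadj
      · set C := W0.getVert 1 with hC
        have hnnil : ¬ W0.Nil := by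
          rw [Walk.nil_iff_length_eq]
          omega
        have hAC : (G.induce s).Adj A C := by
          have := W0.adj_getVert_succ (by omega : 0 < W0.length)
          rwa [Walk.getVert_zero] at this
        by_cases hCB : C = B
        · rwa [hCB] at hAC
        · have htail : (W0.tail).length = (G.induce s).dist A B - 1 := by
            have := Walk.length_tail_add_one hnnil
            omega
          have hdCB : (G.induce s).dist C B ≤ d := by
            have hle := SimpleGraph.dist_le W0.tail
            have hle2 : (G.induce s).dist C B ≤ W0.tail.length := hle
            omega
          have hCBadj : (G.induce s).Adj C B := IHd C B hCB hdCB
          have hAc : A ≠ C := fun h => (G.induce s).irrefl (h ▸ hAC)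
          have hBc : B ≠ C := fun h => hCB h.symm
          obtain ⟨w'⟩ := hcut C ⟨A, hAc⟩ ⟨B, hBc⟩
          have hp'path := w'.bypass_isPath
          set p' := w'.bypass with hp'
          let ι := (SimpleGraph.Embedding.induce {u : ↥s | u ≠ C} :
            (G.induce s).induce {u : ↥s | u ≠ C} ↪g (G.induce s))
          have hιinj : Function.Injective ι.toHom := Subtype.val_injective
          set q : (G.induce s).Walk A B := p'.map ι.toHom with hq
          have hqpath : q.IsPath := Walk.map_isPath_of_injective hιinj hp'path
          have hCq : C ∉ q.support := by
            erw [hq, Walk.support_map]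
            intro hmem
            obtain ⟨z, hz, hzeq⟩ := List.mem_map.mp hmem
            exact z.2 hzeq
          have hCA : (G.induce s).Adj C A := hAC.symm
          have hBC : (G.induce s).Adj B C := hCBadj.symm
          set R : (G.induce s).Walk A C := q.append (Walk.cons hBC Walk.nil) with hR
          have hRsupp : R.support = q.support ++ [C] := by
            rw [hR, Walk.support_append, Walk.support_cons, Walk.support_nil]
            rfl
          have hRpath : R.IsPath := by
            rw [Walk.isPath_def, hRsupp, List.nodup_append]
            refine ⟨hqpath.support_nodup, List.nodup_singleton _, ?_⟩
            intro y hy b hb heq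
            rw [List.mem_singleton] at hb
            subst hb heq
            exact hCq hy
          have hEdge : s(C, A) ∉ R.edges := by
            rw [hR, Walk.edges_append]
            intro hmem
            rcases List.mem_append.mp hmem with h | h
            · exact hCq (Walk.fst_mem_support_of_mem_edges q h)
            · rw [Walk.edges_cons, Walk.edges_nil, List.mem_singleton, Sym2.eq_iff] at h
              rcases h with ⟨h1, h2⟩ | ⟨h1, h2⟩
              · exact hCB h1
              · exact hAB h2
          set CY : (G.induce s).Walk C C := Walk.cons hCA R with hCY
          have hCYcyc : CY.IsCycle := (Walk.cons_isCycle_iff R hCA).mpr ⟨hRpath, hEdge⟩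
          let ι2 := (SimpleGraph.Embedding.induce s : G.induce s ↪g G)
          have hι2inj : Function.Injective ι2.toHom := Subtype.val_injective
          set CYG : G.Walk (C : V) (C : V) := CY.map ι2.toHom with hCYG
          have hCYGcyc : CYG.IsCycle :=
            (Walk.map_isCycle_iff_of_injective hι2inj).mpr hCYcyc
          have hACY : (A : ↥s) ∈ CY.support := by
            rw [hCY, Walk.support_cons]
            refine List.mem_cons_of_mem _ ?_
            rw [hRsupp]
            exact List.mem_append_left _ q.start_mem_support
          have hBCY : (B : ↥s) ∈ CY.support := by
            rw [hCY, Walk.support_cons]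
            refine List.mem_cons_of_mem _ ?_
            rw [hRsupp]
            exact List.mem_append_left _ q.end_mem_support
          have haA : (A : V) ∈ CYG.support := by
            erw [hCYG, Walk.support_map]
            exact List.mem_map.mpr ⟨A, hACY, rfl⟩
          have hbB : (B : V) ∈ CYG.support := by
            erw [hCYG, Walk.support_map]
            exact List.mem_map.mpr ⟨B, hBCY, rfl⟩
          have hneAB : (A : V) ≠ (B : V) := fun h => hAB (Subtype.ext h)
          exact cycle_support_clique hdiamond hcycle CYG.length CYG hCYGcyc rfl haA hbB hneAB
  intro a ha b hb hne
  have hAB : (⟨a, ha⟩ : ↥s) ≠ ⟨b, hb⟩ := fun h => hne (congrArg Subtype.val h)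
  exact key _ _ _ hAB le_rfl
end

section
/- Let T be a tree, L(T) its line graph, and e an end edge of T (an edge incident to a leaf). Let Â(L(T), e) be the adjacency matrix of L(T) modified by putting -1 in the diagonal entry corresponding to the vertex e. Then the smallest eigenvalue of Â(L(T), e) is strictly greater than -2. -/
open SimpleGraph



open scoped Classical in
lemma tree_adj_dist_ne {V : Type*} {T : SimpleGraph V} (hT : T.IsTree) (v a b : V)
    (hab : T.Adj a b) : T.dist a v ≠ T.dist b v := by
  intro h
  obtain ⟨q, hq, hql⟩ := hT.isConnected.exists_path_of_dist b v
  by_cases ha : a ∈ q.support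
  · -- drop until a : walk a → v of length < dist a v
    have htake := congrArg SimpleGraph.Walk.length (q.take_spec ha)
    rw [SimpleGraph.Walk.length_append] at htake
    have h1 : T.dist a v ≤ (q.dropUntil a ha).length := SimpleGraph.dist_le _
    have h2 : (q.takeUntil a ha).length ≠ 0 := by
      intro h0
      exact hab.ne (SimpleGraph.Walk.eq_of_length_eq_zero h0).symm
    omega
  · obtain ⟨p, hp, hpl⟩ := hT.isConnected.exists_path_of_dist a v
    have hr : (SimpleGraph.Walk.cons hab q).IsPath := hq.cons ha
    obtain ⟨P, hPu⟩ := hT.existsUnique_path a v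
    have : p = SimpleGraph.Walk.cons hab q := (hPu.2 p hp).trans (hPu.2 _ hr).symm
    have := congrArg SimpleGraph.Walk.length this
    rw [SimpleGraph.Walk.length_cons] at this
    omega

lemma tree_adj_dist {V : Type*} {T : SimpleGraph V} (hT : T.IsTree) (v a b : V)
    (hab : T.Adj a b) :
    T.dist a v = T.dist b v + 1 ∨ T.dist b v = T.dist a v + 1 := by
  have hne := tree_adj_dist_ne hT v a b hab
  have h1 : T.dist a v ≤ T.dist b v + 1 := by
    obtain ⟨q, hq, hql⟩ := hT.isConnected.exists_path_of_dist b v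
    have := SimpleGraph.dist_le (SimpleGraph.Walk.cons hab q)
    rw [SimpleGraph.Walk.length_cons] at this
    omega
  have h2 : T.dist b v ≤ T.dist a v + 1 := by
    obtain ⟨q, hq, hql⟩ := hT.isConnected.exists_path_of_dist a v
    have := SimpleGraph.dist_le (SimpleGraph.Walk.cons hab.symm q)
    rw [SimpleGraph.Walk.length_cons] at this
    omega
  omega

open scoped Classical in
lemma tree_unique_down {V : Type*} {T : SimpleGraph V} (hT : T.IsTree) (v a b c : V)
    (hab : T.Adj a b) (hac : T.Adj a c)
    (hb : T.dist a v = T.dist b v + 1) (hc : T.dist a v = T.dist c v + 1) : b = c := by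
  obtain ⟨qb, hqb, hqbl⟩ := hT.isConnected.exists_path_of_dist b v
  obtain ⟨qc, hqc, hqcl⟩ := hT.isConnected.exists_path_of_dist c v
  have hanb : a ∉ qb.support := by
    intro ha
    have h1 : T.dist a v ≤ (qb.dropUntil a ha).length := SimpleGraph.dist_le _
    have h2 := SimpleGraph.Walk.length_dropUntil_le qb ha
    omega
  have hanc : a ∉ qc.support := by
    intro ha
    have h1 : T.dist a v ≤ (qc.dropUntil a ha).length := SimpleGraph.dist_le _
    have h2 := SimpleGraph.Walk.length_dropUntil_le qc ha
    omega
  obtain ⟨P, hPu⟩ := hT.existsUnique_path a v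
  have heq : SimpleGraph.Walk.cons hab qb = SimpleGraph.Walk.cons hac qc :=
    (hPu.2 _ (hqb.cons hanb)).trans (hPu.2 _ (hqc.cons hanc)).symm
  have := congrArg SimpleGraph.Walk.support heq
  rw [SimpleGraph.Walk.support_cons, SimpleGraph.Walk.support_cons,
    qb.support_eq_cons, qc.support_eq_cons] at this
  simp only [List.cons.injEq] at this
  exact this.2.1

open scoped Classical in
lemma tree_kernel {V : Type*} [Fintype V] {T : SimpleGraph V} (hT : T.IsTree) (v : V)
    (x : T.edgeSet → ℝ)
    (hs : ∀ u : V, u ≠ v → ∑ f : T.edgeSet, (if u ∈ (f : Sym2 V) then x f else 0) = 0) :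
    ∀ f, x f = 0 := by
  have hlt : ∀ a : V, T.dist a v < Fintype.card V := by
    intro a
    obtain ⟨p, hp, hpl⟩ := hT.isConnected.exists_path_of_dist a v
    have h1 : p.support.Nodup := hp.support_nodup
    have h2 : p.support.length = p.length + 1 := p.length_support
    have h3 := h1.length_le_card
    omega
  have key : ∀ n : ℕ, ∀ (f : T.edgeSet) (a b : V), (f : Sym2 V) = s(a, b) →
      T.dist a v = T.dist b v + 1 → Fintype.card V ≤ n + T.dist a v → x f = 0 := by
    intro n
    induction n with
    | zero =>
      intro f a b _ _ hcard
      have := hlt a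
      omega
    | succ n ih =>
      intro f a b hf hd hcard
      have hadj : T.Adj a b := by rw [← SimpleGraph.mem_edgeSet, ← hf]; exact f.2
      have hav : a ≠ v := by
        intro h; subst h; rw [SimpleGraph.dist_self] at hd; omega
      have hsum := hs a hav
      have hmem : a ∈ (f : Sym2 V) := by rw [hf]; exact Sym2.mem_mk_left a b
      have hothers : ∀ g : T.edgeSet, g ∈ Finset.univ → g ≠ f →
          (if a ∈ (g : Sym2 V) then x g else 0) = 0 := by
        intro g _ hgf
        by_cases hag : a ∈ (g : Sym2 V)
        · obtain ⟨c, hc⟩ := Sym2.mem_iff_exists.mp hag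
          have hac : T.Adj a c := by rw [← SimpleGraph.mem_edgeSet, ← hc]; exact g.2
          have hcb : c ≠ b := by
            intro h; subst h; exact hgf (Subtype.ext (hc.trans hf.symm))
          rcases tree_adj_dist hT v a c hac with h | h
          · exact absurd (tree_unique_down hT v a c b hac hadj h hd) hcb
          · have hgs : (g : Sym2 V) = s(c, a) := by rw [hc, Sym2.eq_swap]
            have hz := ih g c a hgs h (by omega)
            rw [if_pos hag, hz]
        · rw [if_neg hag]
      rw [Finset.sum_eq_single_of_mem f (Finset.mem_univ f) hothers, if_pos hmem] at hsum
      exact hsum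
  intro f
  obtain ⟨b, hb⟩ := Sym2.mem_iff_exists.mp (Sym2.out_fst_mem (f : Sym2 V))
  have hadj : T.Adj (f : Sym2 V).out.1 b := by
    rw [← SimpleGraph.mem_edgeSet, ← hb]; exact f.2
  rcases tree_adj_dist hT v (f : Sym2 V).out.1 b hadj with h | h
  · exact key (Fintype.card V) f _ b hb h (by omega)
  · exact key (Fintype.card V) f b ((f : Sym2 V).out.1) (by rw [Sym2.eq_swap]; exact hb) h (by omega)


open scoped Classical in
lemma card_common {V : Type*} [Fintype V] {T : SimpleGraph V} (e f g : T.edgeSet) :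
    ((Finset.univ.filter fun u : V => u ∈ (f : Sym2 V) ∧ u ∈ (g : Sym2 V)).card : ℝ)
      = (if f = g then (if f = e then (-1:ℝ) else 0)
          else if T.lineGraph.Adj f g then 1 else 0)
        + (if f = g then 2 else 0) + (if f = e ∧ g = e then 1 else 0) := by
  by_cases hfg : f = g
  · subst hfg
    obtain ⟨a, b, hb⟩ : ∃ a b, (f : Sym2 V) = s(a, b) :=
      ⟨_, Sym2.mem_iff_exists.mp (Sym2.out_fst_mem (f : Sym2 V))⟩
    have hadj : T.Adj a b := by
      rw [← SimpleGraph.mem_edgeSet, ← hb]; exact f.2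
    have hset : (Finset.univ.filter fun u : V => u ∈ (f : Sym2 V) ∧ u ∈ (f : Sym2 V))
        = {a, b} := by
      ext u
      simp [hb, Sym2.mem_iff]
    rw [hset, Finset.card_insert_of_notMem (by simp [hadj.ne]), Finset.card_singleton]
    by_cases hfe : f = e <;> simp [hfe]
  · have hee : ¬(f = e ∧ g = e) := by rintro ⟨rfl, rfl⟩; exact hfg rfl
    rw [if_neg hfg, if_neg hfg, if_neg hee]
    by_cases hadj : T.lineGraph.Adj f g
    · obtain ⟨hne, u, huf, hug⟩ := lineGraph_adj_iff_exists.mp hadj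
      have hset : (Finset.univ.filter fun u : V => u ∈ (f : Sym2 V) ∧ u ∈ (g : Sym2 V))
          = {u} := by
        ext u'
        simp only [Finset.mem_filter, Finset.mem_univ, true_and, Finset.mem_singleton]
        constructor
        · rintro ⟨h1, h2⟩
          by_contra hne'
          have hf' := (Sym2.mem_and_mem_iff hne').mp ⟨h1, huf⟩
          have hg' := (Sym2.mem_and_mem_iff hne').mp ⟨h2, hug⟩
          exact hfg (Subtype.ext (hf'.trans hg'.symm))
        · rintro rfl; exact ⟨huf, hug⟩
      rw [hset, Finset.card_singleton, if_pos hadj]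
      norm_num
    · have hset : (Finset.univ.filter fun u : V => u ∈ (f : Sym2 V) ∧ u ∈ (g : Sym2 V))
          = ∅ := by
        ext u
        simp only [Finset.mem_filter, Finset.mem_univ, true_and, Finset.notMem_empty,
          iff_false, not_and]
        intro h1 h2
        exact hadj (lineGraph_adj_iff_exists.mpr ⟨hfg, u, h1, h2⟩)
      rw [hset, if_neg hadj]
      norm_num

open scoped Classical in
/-- Hoffman: if `e` is an end edge of a tree `T`, then the adjacency matrix of
the line graph `L(T)`, modified by putting `-1` in the diagonal entry at `e`, has smallest
eigenvalue strictly greater than `-2`. -/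
theorem stmt_17 {V : Type*} [Fintype V] (T : SimpleGraph V) (hT : T.IsTree)
    (e : T.edgeSet)
    (he : ∃ v w : V, (e : Sym2 V) = s(v, w) ∧ ∀ u : V, T.Adj v u → u = w) :
    let Ahat : Matrix T.edgeSet T.edgeSet ℝ := Matrix.of fun f g =>
      if f = g then (if f = e then -1 else 0)
      else if T.lineGraph.Adj f g then 1 else 0
    ∀ (μ : ℝ) (x : T.edgeSet → ℝ), x ≠ 0 → Ahat.mulVec x = μ • x → -2 < μ := by
  intro Ahat μ x hx heig
  obtain ⟨v, w, hev, hlv⟩ := he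
  have hAdef : ∀ f g : T.edgeSet, Ahat f g =
      (if f = g then (if f = e then (-1:ℝ) else 0)
        else if T.lineGraph.Adj f g then 1 else 0) := fun _ _ => rfl
  set s : V → ℝ := fun u => ∑ f : T.edgeSet, if u ∈ (f : Sym2 V) then x f else 0 with hsdef
  -- the quadratic form identity
  have H1 : ∑ u : V, (s u)^2 = ∑ f : T.edgeSet, ∑ g : T.edgeSet,
      ((Finset.univ.filter fun u : V => u ∈ (f : Sym2 V) ∧ u ∈ (g : Sym2 V)).card : ℝ)
        * (x f * x g) := by
    have step1 : ∀ u : V, (s u)^2 = ∑ f : T.edgeSet, ∑ g : T.edgeSet,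
        (if u ∈ (f : Sym2 V) ∧ u ∈ (g : Sym2 V) then x f * x g else 0) := by
      intro u
      simp only [hsdef]
      rw [pow_two, Finset.sum_mul_sum]
      refine Finset.sum_congr rfl fun f _ => Finset.sum_congr rfl fun g _ => ?_
      by_cases h1 : u ∈ (f : Sym2 V) <;> by_cases h2 : u ∈ (g : Sym2 V) <;> simp [h1, h2]
    rw [Finset.sum_congr rfl fun u _ => step1 u]
    rw [Finset.sum_comm]
    refine Finset.sum_congr rfl fun f _ => ?_
    rw [Finset.sum_comm]
    refine Finset.sum_congr rfl fun g _ => ?_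
    rw [Finset.sum_ite, Finset.sum_const, Finset.sum_const_zero, add_zero, nsmul_eq_mul]
  -- rewrite the counting cards via `card_common`
  have H2 : ∑ u : V, (s u)^2
      = dotProduct x (Ahat.mulVec x) + 2 * (∑ f : T.edgeSet, (x f)^2) + (x e)^2 := by
    rw [H1]
    have hsplit : ∀ f g : T.edgeSet,
        ((Finset.univ.filter fun u : V => u ∈ (f : Sym2 V) ∧ u ∈ (g : Sym2 V)).card : ℝ)
          * (x f * x g)
        = Ahat f g * (x f * x g) + (if f = g then (2:ℝ) else 0) * (x f * x g)
          + (if f = e ∧ g = e then (1:ℝ) else 0) * (x f * x g) := by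
      intro f g
      rw [card_common e f g, hAdef]
      ring
    rw [Finset.sum_congr rfl fun f _ => Finset.sum_congr rfl fun g _ => hsplit f g]
    have e1 : ∑ f : T.edgeSet, ∑ g : T.edgeSet, Ahat f g * (x f * x g)
        = dotProduct x (Ahat.mulVec x) := by
      simp only [Matrix.mulVec, dotProduct]
      refine Finset.sum_congr rfl fun f _ => ?_
      rw [Finset.mul_sum]
      refine Finset.sum_congr rfl fun g _ => ?_
      ring
    have e2 : ∑ f : T.edgeSet, ∑ g : T.edgeSet,
        (if f = g then (2:ℝ) else 0) * (x f * x g) = 2 * ∑ f : T.edgeSet, (x f)^2 := by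
      rw [Finset.mul_sum]
      refine Finset.sum_congr rfl fun f _ => ?_
      have : ∀ g : T.edgeSet, (if f = g then (2:ℝ) else 0) * (x f * x g)
          = if f = g then 2 * (x f * x g) else 0 := by
        intro g; split_ifs <;> ring
      rw [Finset.sum_congr rfl fun g _ => this g, Finset.sum_ite_eq,
        if_pos (Finset.mem_univ f)]
      ring
    have e3 : ∑ f : T.edgeSet, ∑ g : T.edgeSet,
        (if f = e ∧ g = e then (1:ℝ) else 0) * (x f * x g) = (x e)^2 := by
      have : ∀ f g : T.edgeSet, (if f = e ∧ g = e then (1:ℝ) else 0) * (x f * x g)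
          = if f = e then (if g = e then x f * x g else 0) else 0 := by
        intro f g; by_cases h1 : f = e <;> by_cases h2 : g = e <;> simp [h1, h2]
      rw [Finset.sum_congr rfl fun f _ => Finset.sum_congr rfl fun g _ => this f g]
      have hinner : ∀ f : T.edgeSet, (∑ g : T.edgeSet,
          if f = e then (if g = e then x f * x g else 0) else 0)
          = if f = e then x f * x e else 0 := by
        intro f
        by_cases hf : f = e
        · simp only [if_pos hf]
          rw [Finset.sum_ite_eq' Finset.univ e fun g => x f * x g,
            if_pos (Finset.mem_univ e)]
        · simp [hf]
      rw [Finset.sum_congr rfl fun f _ => hinner f,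
        Finset.sum_ite_eq' Finset.univ e fun f => x f * x e,
        if_pos (Finset.mem_univ e), pow_two]
    simp only [Finset.sum_add_distrib]
    rw [e1, e2, e3]
  -- s v = x e
  have hsv : s v = x e := by
    simp only [hsdef]
    have hve : v ∈ (e : Sym2 V) := by rw [hev]; exact Sym2.mem_mk_left v w
    refine (Finset.sum_eq_single_of_mem e (Finset.mem_univ e) ?_).trans (if_pos hve)
    intro g _ hge
    by_cases hvg : v ∈ (g : Sym2 V)
    · obtain ⟨c, hc⟩ := Sym2.mem_iff_exists.mp hvg
      have hadj : T.Adj v c := by rw [← SimpleGraph.mem_edgeSet, ← hc]; exact g.2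
      have hcw := hlv c hadj
      exact absurd (Subtype.ext (by rw [hc, hcw, ← hev])) hge
    · exact if_neg hvg
  have hEig : dotProduct x (Ahat.mulVec x) = μ * ∑ f : T.edgeSet, (x f)^2 := by
    rw [heig]
    simp only [dotProduct, Pi.smul_apply, smul_eq_mul, Finset.mul_sum]
    exact Finset.sum_congr rfl fun f _ => by ring
  have hsplitv : ∑ u ∈ Finset.univ.erase v, (s u)^2
      = (μ + 2) * ∑ f : T.edgeSet, (x f)^2 := by
    have h2 : ∑ u ∈ Finset.univ.erase v, (s u)^2 + (s v)^2 = ∑ u : V, (s u)^2 :=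
      Finset.sum_erase_add Finset.univ (fun u => (s u)^2) (Finset.mem_univ v)
    rw [H2, hEig, hsv] at h2
    linarith
  by_contra hmu
  push_neg at hmu
  have hex : ∃ u, u ≠ v ∧ s u ≠ 0 := by
    by_contra hall
    push_neg at hall
    have hz : ∀ f, x f = 0 := tree_kernel hT v x (fun u hu => by
      have := hall u hu
      simpa only [hsdef] using this)
    exact hx (funext hz)
  obtain ⟨u₀, hu₀v, hu₀⟩ := hex
  have hpos : 0 < ∑ u ∈ Finset.univ.erase v, (s u)^2 := by
    have hle : (s u₀)^2 ≤ ∑ u ∈ Finset.univ.erase v, (s u)^2 :=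
      Finset.single_le_sum (fun i _ => sq_nonneg (s i))
        (Finset.mem_erase.mpr ⟨hu₀v, Finset.mem_univ u₀⟩)
    have h0 : 0 < (s u₀)^2 := by positivity
    linarith
  have hS : 0 ≤ ∑ f : T.edgeSet, (x f)^2 := Finset.sum_nonneg fun f _ => sq_nonneg _
  rw [hsplitv] at hpos
  nlinarith
end
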